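/- arXiv:1504.07545 — 8 statements merged into one kernel-verified Lean document; each statement's English description precedes it below -/
import Mathlib

section
/- Let $x$ be an element of a polymatroid base polytope $P_\rho$ and let $c_e : \mathbb{R}_{\geq 0} \to \mathbb{R}_{\geq 0}$, for $e \in E$, be continuous nondecreasing cost functions. Then $x$ minimizes the Beckmann potential $\Phi(x) = \sum_{e \in E} \int_0^{x_e} c_e(t)\,dt$ over $P_\rho$ if and only if for every pair $e, f \in E$ such that $x + \epsilon(\chi_f - \chi_e) \in P_\rho$ for some $\epsilon > 0$, we have $c_e(x_e) \leq c_f(x_f)$. -/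
open Finset MeasureTheory

/-- The polymatroid base polytope of `ρ`. -/
def basePolytope {E : Type*} [Fintype E] (ρ : Finset E → ℝ) : Set (E → ℝ) :=
  {x | (∀ e, 0 ≤ x e) ∧ (∀ U : Finset E, ∑ e ∈ U, x e ≤ ρ U) ∧ ∑ e, x e = ρ Finset.univ}

/-- The Beckmann potential. -/
noncomputable def beckmann {E : Type*} [Fintype E] (c : E → ℝ → ℝ) (x : E → ℝ) : ℝ :=
  ∑ e, ∫ t in (0:ℝ)..(x e), c e t

/-!
Since every `c e` is nondecreasing, `c(x)` is a subgradient of the Beckmann potential `Φ` at `x`: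
`∑ c_e(x_e) (y_e - x_e) ≤ Φ(y) - Φ(x) ≤ ∑ c_e(y_e) (y_e - x_e)`.

Necessity: by convexity of `P_ρ`, moving any `δ ∈ (0, ε]` from `e` to `f` stays feasible, and the
upper bound gives `0 ≤ δ (c_f(x_f + δ) - c_e(x_e - δ))`; let `δ → 0`.

Sufficiency: by the lower bound and Abel summation (in layer-cake form) it suffices that `y(A) ≤ x(A)` for every
sublevel set `A = {e | c_e(x_e) ≤ t}` and `y ∈ P_ρ`. Tight sets of `x` are closed under `∪` and
`∩` by submodularity, so the union `U` of the smallest tight sets containing the elements of `A` is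
tight. If `g ∈ U \ A` had `x_g > 0`, it would lie in the smallest tight set of some `f ∈ A`, so mass
could be moved from `g` to `f`, forcing `c_g(x_g) ≤ c_f(x_f) ≤ t`. Hence
`y(A) ≤ y(U) ≤ ρ(U) = x(U) = x(A)`.
-/

open Filter Topology Set

theorem sum_mul_nonneg_of_sum_filter_le_nonpos {ι : Type*} (s : Finset ι) (w z : ι → ℝ)
    (hz : ∑ i ∈ s, z i = 0) (h : ∀ t, ∑ i ∈ s with w i ≤ t, z i ≤ 0) :
    0 ≤ ∑ i ∈ s, w i * z i := by
  obtain ⟨M, hM⟩ : ∃ M, ∀ i ∈ s, w i ≤ M :=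
    (s.image w).exists_le.imp fun M hM i hi => hM _ (mem_image_of_mem _ hi)
  -- layer cake: `M - w i` is the length of `{t < M | w i ≤ t}`, turning `∑ w z` into
  -- minus the integral over `t` of the sublevel sums `∑_{w i ≤ t} z i`
  have hlayer : ∀ i ∈ s, M - w i = ∫ t, (Ico (w i) M).indicator 1 t := fun i hi => by
    rw [integral_indicator_one measurableSet_Ico, Real.volume_real_Ico_of_le (hM i hi)]
  have hint : ∀ i ∈ s, Integrable fun t => z i * (Ico (w i) M).indicator 1 t := fun i _ =>
    ((integrable_indicator_iff measurableSet_Ico).2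
      (integrableOn_const measure_Ico_lt_top.ne)).const_mul _
  have hsum : ∑ i ∈ s, w i * z i = -∫ t, ∑ i ∈ s, z i * (Ico (w i) M).indicator 1 t := by
    rw [integral_finsetSum s hint]
    calc ∑ i ∈ s, w i * z i = M * ∑ i ∈ s, z i - ∑ i ∈ s, z i * (M - w i) := by
          rw [mul_sum, ← sum_sub_distrib]; exact sum_congr rfl fun i _ => by ring
      _ = _ := by
          rw [hz, mul_zero, zero_sub]
          exact congrArg _ (sum_congr rfl fun i hi => by rw [hlayer i hi, integral_const_mul])
  rw [hsum, neg_nonneg]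
  refine integral_nonpos fun t => show ∑ i ∈ s, _ ≤ 0 from ?_
  by_cases htM : t < M
  · refine le_of_eq_of_le ?_ (h t)
    rw [sum_filter]
    exact sum_congr rfl fun i _ => by by_cases hwt : w i ≤ t <;> simp [htM, hwt]
  · exact (sum_eq_zero fun i _ => by simp [htM]).le

theorem mul_sub_le_intervalIntegral_of_monotoneOn {c : ℝ → ℝ} {a b : ℝ}
    (hc : MonotoneOn c (uIcc a b)) : c a * (b - a) ≤ ∫ t in a..b, c t := by
  have hint : IntervalIntegrable c volume a b := hc.intervalIntegrable
  rcases le_total a b with hab | hba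
  · have := intervalIntegral.integral_mono_on hab intervalIntegrable_const hint
      fun t ht => hc left_mem_uIcc (Icc_subset_uIcc ht) ht.1
    simpa [mul_comm] using this
  · have := intervalIntegral.integral_mono_on hba hint.symm
      intervalIntegrable_const fun t ht => hc (Icc_subset_uIcc' ht) left_mem_uIcc ht.2
    rw [intervalIntegral.integral_symm]
    simp only [intervalIntegral.integral_const, smul_eq_mul] at this
    nlinarith

theorem le_of_forall_sub_le_add {u v : ℝ → ℝ} {a b ε : ℝ} (hε : 0 < ε)
    (hu : ContinuousWithinAt u (Icc (a - ε) a) a) (hv : ContinuousWithinAt v (Ici b) b)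
    (h : ∀ δ ∈ Ioc 0 ε, u (a - δ) ≤ v (b + δ)) : u a ≤ v b := by
  have hδ : ∀ᶠ δ in 𝓝[>] (0 : ℝ), δ ∈ Ioc 0 ε := Ioc_mem_nhdsGT hε
  have hsub : Tendsto (fun δ => a - δ) (𝓝[>] 0) (𝓝[Icc (a - ε) a] a) := by
    have : Tendsto (fun δ => a - δ) (𝓝 0) (𝓝 (a - 0)) := tendsto_const_nhds.sub tendsto_id
    rw [sub_zero] at this
    exact tendsto_nhdsWithin_iff.2 ⟨this.mono_left nhdsWithin_le_nhds,
      hδ.mono fun δ hδ => ⟨by linarith [hδ.2], by linarith [hδ.1]⟩⟩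
  have hadd : Tendsto (fun δ => b + δ) (𝓝[>] 0) (𝓝[Ici b] b) := by
    have : Tendsto (fun δ => b + δ) (𝓝 0) (𝓝 (b + 0)) := tendsto_const_nhds.add tendsto_id
    rw [add_zero] at this
    exact tendsto_nhdsWithin_iff.2 ⟨this.mono_left nhdsWithin_le_nhds,
      hδ.mono fun δ hδ => show b ≤ b + δ by linarith [hδ.1]⟩
  exact le_of_tendsto_of_tendsto (hu.tendsto.comp hsub) (hv.tendsto.comp hadd) (hδ.mono h)

theorem eventually_add_mul_le {a b k : ℝ} (h : a < b ∨ a ≤ b ∧ k ≤ 0) :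
    ∀ᶠ ε in 𝓝[>] (0 : ℝ), a + ε * k ≤ b := by
  rcases h with h | ⟨h, hk⟩
  · have : Tendsto (fun ε : ℝ => a + ε * k) (𝓝 0) (𝓝 (a + 0 * k)) :=
      tendsto_const_nhds.add (tendsto_id.mul tendsto_const_nhds)
    rw [zero_mul, add_zero] at this
    exact (this.mono_left nhdsWithin_le_nhds).eventually (eventually_le_nhds h)
  · filter_upwards [self_mem_nhdsWithin] with ε (hε : 0 < ε)
    nlinarith

section BasePolytope

variable {E : Type*} {ρ : Finset E → ℝ} {x : E → ℝ}

theorem convex_basePolytope [Fintype E] (ρ : Finset E → ℝ) : Convex ℝ (basePolytope ρ) := by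
  rintro x ⟨hx0, hxle, hxuniv⟩ y ⟨hy0, hyle, hyuniv⟩ a b ha hb hab
  refine ⟨fun e => ?_, fun U => ?_, ?_⟩
  · simpa using add_nonneg (mul_nonneg ha (hx0 e)) (mul_nonneg hb (hy0 e))
  · simp only [Pi.add_apply, Pi.smul_apply, smul_eq_mul, sum_add_distrib, ← mul_sum]
    have hρ : ρ U = a * ρ U + b * ρ U := by rw [← add_mul, hab, one_mul]
    nlinarith [mul_le_mul_of_nonneg_left (hxle U) ha, mul_le_mul_of_nonneg_left (hyle U) hb]
  · simp only [Pi.add_apply, Pi.smul_apply, smul_eq_mul, sum_add_distrib, ← mul_sum]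
    rw [hxuniv, hyuniv, ← add_mul, hab, one_mul]

def IsTight (ρ : Finset E → ℝ) (x : E → ℝ) (V : Finset E) : Prop :=
  ∑ e ∈ V, x e = ρ V

theorem IsTight.union_inter [DecidableEq E]
    (hsub : ∀ U V : Finset E, ρ (U ∪ V) + ρ (U ∩ V) ≤ ρ U + ρ V)
    (hle : ∀ U : Finset E, ∑ e ∈ U, x e ≤ ρ U) {U V : Finset E}
    (hU : IsTight ρ x U) (hV : IsTight ρ x V) :
    IsTight ρ x (U ∪ V) ∧ IsTight ρ x (U ∩ V) := by
  unfold IsTight at *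
  have := sum_union_inter (s₁ := U) (s₂ := V) (f := x)
  constructor <;> linarith [hle (U ∪ V), hle (U ∩ V), hsub U V]

variable [Fintype E]

open Classical in
noncomputable def tightClosure [DecidableEq E] (ρ : Finset E → ℝ) (x : E → ℝ) (f : E) : Finset E :=
  ({V | IsTight ρ x V ∧ f ∈ V} : Finset (Finset E)).inf id

theorem mem_tightClosure [DecidableEq E] {e f : E} :
    e ∈ tightClosure ρ x f ↔ ∀ V, IsTight ρ x V → f ∈ V → e ∈ V := by
  simp [tightClosure, mem_inf]

theorem self_mem_tightClosure [DecidableEq E] (f : E) : f ∈ tightClosure ρ x f :=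
  mem_tightClosure.2 fun _ _ hf => hf

theorem isTight_tightClosure [DecidableEq E]
    (hsub : ∀ U V : Finset E, ρ (U ∪ V) + ρ (U ∩ V) ≤ ρ U + ρ V)
    (hx : x ∈ basePolytope ρ) (f : E) : IsTight ρ x (tightClosure ρ x f) :=
  inf_induction hx.2.2 (fun _ hU _ hV => (hU.union_inter hsub hx.2.1 hV).2)
    fun _ hV => by simp only [mem_filter] at hV; exact hV.2.1

theorem eventually_add_smul_mem_basePolytope (hx : x ∈ basePolytope ρ) {d : E → ℝ}
    (hd0 : ∀ e, x e = 0 → 0 ≤ d e) (hdV : ∀ V, IsTight ρ x V → ∑ e ∈ V, d e ≤ 0)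
    (hd : ∑ e, d e = 0) :
    ∀ᶠ ε in 𝓝[>] (0 : ℝ), x + ε • d ∈ basePolytope ρ := by
  obtain ⟨hx0, hxle, hxuniv⟩ := hx
  have hsum : ∀ (ε : ℝ) (V : Finset E),
      ∑ e ∈ V, (x + ε • d) e = ∑ e ∈ V, x e + ε * ∑ e ∈ V, d e := fun ε V => by
    simp [sum_add_distrib, mul_sum]
  have hnonneg : ∀ᶠ ε in 𝓝[>] (0 : ℝ), ∀ e, 0 ≤ (x + ε • d) e := eventually_all.2 fun e => by
    have : -x e < 0 ∨ -x e ≤ 0 ∧ -d e ≤ 0 := by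
      rcases (hx0 e).lt_or_eq with h | h
      · exact .inl (by linarith)
      · exact .inr ⟨by linarith, by linarith [hd0 e h.symm]⟩
    filter_upwards [eventually_add_mul_le this] with ε hε
    simp only [Pi.add_apply, Pi.smul_apply, smul_eq_mul]
    linarith
  have hle : ∀ᶠ ε in 𝓝[>] (0 : ℝ), ∀ V, ∑ e ∈ V, (x + ε • d) e ≤ ρ V :=
    eventually_all.2 fun V => by
      simp only [hsum]
      exact eventually_add_mul_le ((hxle V).lt_or_eq.imp_right fun h => ⟨h.le, hdV V h⟩)
  filter_upwards [hnonneg, hle] with ε h0 hV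
  exact ⟨h0, hV, by rw [hsum ε univ, hd, mul_zero, add_zero, hxuniv]⟩

def CanExchange [DecidableEq E] (ρ : Finset E → ℝ) (x : E → ℝ) (e f : E) : Prop :=
  ∃ ε : ℝ, 0 < ε ∧ x + ε • (Pi.single f (1:ℝ) - Pi.single e 1) ∈ basePolytope ρ

theorem canExchange_of_mem_tightClosure [DecidableEq E] (hx : x ∈ basePolytope ρ) {e f : E}
    (hef : e ≠ f) (hxe : 0 < x e) (he : e ∈ tightClosure ρ x f) : CanExchange ρ x e f := by
  have hsum : ∀ V : Finset E, ∑ g ∈ V, (Pi.single f (1:ℝ) - Pi.single e 1 : E → ℝ) g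
      = (if f ∈ V then 1 else 0) - (if e ∈ V then 1 else 0) := fun V => by
    simp [Pi.single_apply, sum_sub_distrib]
  have hfeas := eventually_add_smul_mem_basePolytope hx (d := Pi.single f (1:ℝ) - Pi.single e 1)
    (fun g hg => by
      have hge : g ≠ e := by rintro rfl; linarith
      rw [Pi.sub_apply, Pi.single_eq_of_ne hge, sub_zero, Pi.single_apply]
      split_ifs <;> norm_num)
    (fun V hV => by
      rw [hsum]
      by_cases hfV : f ∈ V
      · simp [hfV, mem_tightClosure.1 he V hV hfV]
      · simp only [hfV, if_false]; split_ifs <;> norm_num)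
    (by simp)
  obtain ⟨ε, hε, hεpos⟩ := (hfeas.and self_mem_nhdsWithin).exists
  exact ⟨ε, hεpos, hε⟩

theorem sum_filter_le_sum_filter_of_exchange [DecidableEq E]
    (hsub : ∀ U V : Finset E, ρ (U ∪ V) + ρ (U ∩ V) ≤ ρ U + ρ V) (hnorm : ρ ∅ = 0)
    (hx : x ∈ basePolytope ρ) {y : E → ℝ} (hy : y ∈ basePolytope ρ) {w : E → ℝ}
    (hw : ∀ e f, CanExchange ρ x e f → w e ≤ w f) (t : ℝ) :
    ∑ g with w g ≤ t, y g ≤ ∑ g with w g ≤ t, x g := by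
  set A : Finset E := {g | w g ≤ t}
  set U := A.sup (tightClosure ρ x)
  have hU : IsTight ρ x U :=
    sup_induction hnorm.symm (fun _ hU _ hV => (hU.union_inter hsub hx.2.1 hV).1)
      fun f _ => isTight_tightClosure hsub hx f
  have hAU : A ⊆ U := fun g hg => mem_sup.2 ⟨g, hg, self_mem_tightClosure g⟩
  -- an element of `U \ A` with positive mass could be exchanged into `A`, lowering its level
  have hzero : ∀ g ∈ U, g ∉ A → x g = 0 := by
    intro g hgU hgA
    obtain ⟨f, hfA, hg⟩ := mem_sup.1 hgU
    have hgf : g ≠ f := by rintro rfl; exact hgA hfA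
    by_contra hxg
    have := hw g f (canExchange_of_mem_tightClosure hx hgf ((hx.1 g).lt_of_ne' hxg) hg)
    exact hgA (mem_filter.2 ⟨mem_univ g, this.trans (mem_filter.1 hfA).2⟩)
  calc ∑ g ∈ A, y g ≤ ∑ g ∈ U, y g := sum_le_sum_of_subset_of_nonneg hAU fun g _ _ => hy.1 g
    _ ≤ ρ U := hy.2.1 U
    _ = ∑ g ∈ U, x g := hU.symm
    _ = ∑ g ∈ A, x g := (sum_subset hAU hzero).symm

end BasePolytope

section Beckmann

variable {E : Type*} [Fintype E] {c : E → ℝ → ℝ} {x y : E → ℝ}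

theorem beckmann_sub_beckmann (hc : ∀ e, MonotoneOn (c e) (Ici 0))
    (hx : ∀ e, 0 ≤ x e) (hy : ∀ e, 0 ≤ y e) :
    beckmann c y - beckmann c x = ∑ e, ∫ t in x e..y e, c e t := by
  rw [beckmann, beckmann, ← sum_sub_distrib]
  have hint : ∀ e {a : ℝ}, 0 ≤ a → IntervalIntegrable (c e) volume 0 a := fun e a ha =>
    ((hc e).mono (ordConnected_Ici.uIcc_subset self_mem_Ici ha)).intervalIntegrable
  exact sum_congr rfl fun e _ =>
    intervalIntegral.integral_interval_sub_left (hint e (hy e)) (hint e (hx e))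

theorem sum_mul_sub_le_beckmann_sub (hc : ∀ e, MonotoneOn (c e) (Ici 0))
    (hx : ∀ e, 0 ≤ x e) (hy : ∀ e, 0 ≤ y e) :
    ∑ e, c e (x e) * (y e - x e) ≤ beckmann c y - beckmann c x := by
  rw [beckmann_sub_beckmann hc hx hy]
  exact sum_le_sum fun e _ => mul_sub_le_intervalIntegral_of_monotoneOn
    ((hc e).mono (ordConnected_Ici.uIcc_subset (hx e) (hy e)))

end Beckmann

section Optimality

variable {E : Type*} [Fintype E] [DecidableEq E] {ρ : Finset E → ℝ} {c : E → ℝ → ℝ}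
  {x : E → ℝ}

theorem IsMinOn.cost_le_of_exchange (hmin : IsMinOn (beckmann c) (basePolytope ρ) x)
    (hc_cont : ∀ e, ContinuousOn (c e) (Ici 0)) (hc_mono : ∀ e, MonotoneOn (c e) (Ici 0))
    (hx : x ∈ basePolytope ρ) {e f : E} (hexch : CanExchange ρ x e f) :
    c e (x e) ≤ c f (x f) := by
  rcases eq_or_ne e f with rfl | hef
  · exact le_rfl
  obtain ⟨ε, hε, hxε⟩ := hexch
  set d : E → ℝ := Pi.single f 1 - Pi.single e 1
  have hεe : ε ≤ x e := by simpa [d, hef] using hxε.1 e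
  refine le_of_forall_sub_le_add hε
    (((hc_cont e).mono fun t ht => (sub_nonneg.2 hεe).trans ht.1).continuousWithinAt
      ⟨by linarith, le_rfl⟩)
    (((hc_cont f).mono (Ici_subset_Ici.2 (hx.1 f))).continuousWithinAt self_mem_Ici)
    fun δ ⟨hδ, hδε⟩ => ?_
  have hy : x + δ • d ∈ basePolytope ρ := by
    have := (convex_basePolytope ρ).add_smul_mem hx hxε
      (t := δ / ε) ⟨by positivity, div_le_one_of_le₀ hδε hε.le⟩
    rwa [smul_smul, div_mul_cancel₀ _ hε.ne'] at this
  have hbound := sum_mul_sub_le_beckmann_sub hc_mono hy.1 hx.1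
  have hsum : ∑ g, c g ((x + δ • d) g) * (x g - (x + δ • d) g)
      = δ * (c e (x e - δ) - c f (x f + δ)) := by
    simp [d, Pi.single_apply, mul_sub, sum_sub_distrib, hef, hef.symm, ← sub_eq_add_neg]
    ring
  have hle : δ * (c e (x e - δ) - c f (x f + δ)) ≤ 0 := by
    linarith [isMinOn_iff.1 hmin _ hy]
  nlinarith

theorem isMinOn_beckmann_of_exchange
    (hsub : ∀ U V : Finset E, ρ (U ∪ V) + ρ (U ∩ V) ≤ ρ U + ρ V) (hnorm : ρ ∅ = 0)
    (hc : ∀ e, MonotoneOn (c e) (Ici 0)) (hx : x ∈ basePolytope ρ)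
    (hexch : ∀ e f, CanExchange ρ x e f → c e (x e) ≤ c f (x f)) :
    IsMinOn (beckmann c) (basePolytope ρ) x := by
  refine isMinOn_iff.2 fun y hy => ?_
  have hz : ∑ g, (y g - x g) = 0 := by rw [sum_sub_distrib, hy.2.2, hx.2.2, sub_self]
  have := sum_mul_nonneg_of_sum_filter_le_nonpos univ (fun g => c g (x g)) (fun g => y g - x g)
    hz fun t => by
      rw [sum_sub_distrib]
      exact sub_nonpos.2 (sum_filter_le_sum_filter_of_exchange hsub hnorm hx hy hexch t)
  linarith [sum_mul_sub_le_beckmann_sub hc hx.1 hy.1]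

end Optimality

theorem stmt0_general {E : Type*} [Fintype E] [DecidableEq E] (ρ : Finset E → ℝ)
    (hsub : ∀ U V : Finset E, ρ (U ∪ V) + ρ (U ∩ V) ≤ ρ U + ρ V)
    (hnorm : ρ ∅ = 0)
    (c : E → ℝ → ℝ)
    (hc_cont : ∀ e, ContinuousOn (c e) (Set.Ici 0))
    (hc_mono : ∀ e, MonotoneOn (c e) (Set.Ici 0))
    (x : E → ℝ) (hx : x ∈ basePolytope ρ) :
    (∀ y ∈ basePolytope ρ, beckmann c x ≤ beckmann c y) ↔
      (∀ e f : E,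
        (∃ ε : ℝ, 0 < ε ∧ x + ε • (Pi.single f (1:ℝ) - Pi.single e 1) ∈ basePolytope ρ) →
        c e (x e) ≤ c f (x f)) :=
  ⟨fun hmin _ _ => (isMinOn_iff.2 hmin).cost_le_of_exchange hc_cont hc_mono hx,
    fun hexch => isMinOn_iff.1 (isMinOn_beckmann_of_exchange hsub hnorm hc_mono hx hexch)⟩

theorem stmt0 {E : Type*} [Fintype E] [DecidableEq E] (ρ : Finset E → ℝ)
    (hsub : ∀ U V : Finset E, ρ (U ∪ V) + ρ (U ∩ V) ≤ ρ U + ρ V)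
    (hmono : ∀ U V : Finset E, U ⊆ V → ρ U ≤ ρ V)
    (hnorm : ρ ∅ = 0)
    (c : E → ℝ → ℝ)
    (hc_cont : ∀ e, ContinuousOn (c e) (Set.Ici 0))
    (hc_mono : ∀ e, MonotoneOn (c e) (Set.Ici 0))
    (hc_nonneg : ∀ e, ∀ t ∈ Set.Ici (0:ℝ), 0 ≤ c e t)
    (x : E → ℝ) (hx : x ∈ basePolytope ρ) :
    (∀ y ∈ basePolytope ρ, beckmann c x ≤ beckmann c y) ↔
      (∀ e f : E,
        (∃ ε : ℝ, 0 < ε ∧ x + ε • (Pi.single f (1:ℝ) - Pi.single e 1) ∈ basePolytope ρ) →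
        c e (x e) ≤ c f (x f)) :=
  stmt0_general ρ hsub hnorm c hc_cont hc_mono x hx
end

section
/- Let $P_\rho$ be a polymatroid base polytope over a finite ground set $E$, and let $c_e, \bar{c}_e : \mathbb{R}_{\geq 0} \to \mathbb{R}_{\geq 0}$ be continuous nondecreasing functions with $\bar{c}_e(t) \leq c_e(t)$ for all $e \in E$ and $t \geq 0$. If $x$ minimizes $\Phi(x) = \sum_{e} \int_0^{x_e} c_e(t)\,dt$ over $P_\rho$ and $\bar{x}$ minimizes $\bar{\Phi}(x) = \sum_e \int_0^{x_e} \bar{c}_e(t)\,dt$ over $P_\rho$, then $\bar{c}_e(\bar{x}_e) \leq c_e(x_e)$ for every $e \in E$. -/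
open Finset MeasureTheory

lemma tight_lemma {E : Type*} [Fintype E] [DecidableEq E] (ρ : Finset E → ℝ)
    (hsub : ∀ U V : Finset E, ρ (U ∪ V) + ρ (U ∩ V) ≤ ρ U + ρ V)
    (x : E → ℝ) (hx : x ∈ basePolytope ρ) (U V : Finset E)
    (hU : ∑ e ∈ U, x e = ρ U) (hV : ∑ e ∈ V, x e = ρ V) :
    ∑ e ∈ U ∪ V, x e = ρ (U ∪ V) ∧ ∑ e ∈ U ∩ V, x e = ρ (U ∩ V) := by
  have hs := Finset.sum_union_inter (s₁ := U) (s₂ := V) (f := x)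
  have h1 := hx.2.1 (U ∪ V)
  have h2 := hx.2.1 (U ∩ V)
  have h3 := hsub U V
  constructor <;> linarith

lemma move_mem {E : Type*} [Fintype E] [DecidableEq E] (ρ : Finset E → ℝ)
    (z : E → ℝ) (hz : z ∈ basePolytope ρ) (e f : E) (hef : e ≠ f)
    (ε : ℝ) (hε : 0 < ε) (hεf : ε ≤ z f)
    (hslack : ∀ U : Finset E, e ∈ U → f ∉ U → ∑ g ∈ U, z g + ε ≤ ρ U) :
    (fun g => z g + (if g = e then ε else 0) - (if g = f then ε else 0)) ∈ basePolytope ρ := by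
  have hsum : ∀ U : Finset E,
      ∑ g ∈ U, (z g + (if g = e then ε else 0) - (if g = f then ε else 0))
        = ∑ g ∈ U, z g + (if e ∈ U then ε else 0) - (if f ∈ U then ε else 0) := by
    intro U
    rw [Finset.sum_sub_distrib, Finset.sum_add_distrib, Finset.sum_ite_eq' U e (fun _ => ε),
      Finset.sum_ite_eq' U f (fun _ => ε)]
  refine ⟨?_, ?_, ?_⟩
  · intro g
    by_cases hge : g = e
    · subst hge
      simp only [if_pos rfl, if_neg hef, if_true]
      have := hz.1 g; linarith
    · by_cases hgf : g = f
      · subst hgf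
        simp only [if_neg hge, if_pos rfl, if_true]
        linarith
      · simp only [if_neg hge, if_neg hgf]
        have := hz.1 g; linarith
  · intro U
    simp only []
    rw [hsum U]
    by_cases heU : e ∈ U <;> by_cases hfU : f ∈ U <;> simp only [heU, hfU, if_true, if_false]
    · have := hz.2.1 U; linarith
    · have := hslack U heU hfU; linarith
    · have := hz.2.1 U; linarith
    · have := hz.2.1 U; linarith
  · simp only []
    rw [hsum Finset.univ]
    simp [hz.2.2]

lemma exchange {E : Type*} [Fintype E] [DecidableEq E] (ρ : Finset E → ℝ)
    (hsub : ∀ U V : Finset E, ρ (U ∪ V) + ρ (U ∩ V) ≤ ρ U + ρ V)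
    (hnorm : ρ ∅ = 0)
    (x xbar : E → ℝ) (hx : x ∈ basePolytope ρ) (hxbar : xbar ∈ basePolytope ρ)
    (e : E) (he : x e < xbar e) :
    ∃ f, f ≠ e ∧ xbar f < x f ∧ ∃ ε : ℝ, 0 < ε ∧ ∀ δ : ℝ, 0 < δ → δ ≤ ε →
      (fun g => x g + (if g = e then δ else 0) - (if g = f then δ else 0)) ∈ basePolytope ρ ∧
      (fun g => xbar g + (if g = f then δ else 0) - (if g = e then δ else 0)) ∈ basePolytope ρ := by
  classical
  -- the family of x-tight sets containing e
  set Tx : Finset (Finset E) :=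
    Finset.univ.powerset.filter (fun U => e ∈ U ∧ ∑ g ∈ U, x g = ρ U) with hTx
  have huniv : Finset.univ ∈ Tx := by
    simp [hTx, Finset.mem_filter, hx.2.2]
  have hTxne : Tx.Nonempty := ⟨_, huniv⟩
  set S : Finset E := Tx.inf' hTxne id with hSdef
  have hS : e ∈ S ∧ ∑ g ∈ S, x g = ρ S := by
    refine Finset.inf'_induction (p := fun U => e ∈ U ∧ ∑ g ∈ U, x g = ρ U) hTxne id ?_ ?_
    · intro U hU V hV
      have := (tight_lemma ρ hsub x hx U V hU.2 hV.2).2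
      rw [Finset.inf_eq_inter]
      exact ⟨Finset.mem_inter.mpr ⟨hU.1, hV.1⟩, this⟩
    · intro U hU
      exact (Finset.mem_filter.mp hU).2
  have hSmin : ∀ U : Finset E, e ∈ U → ∑ g ∈ U, x g = ρ U → S ⊆ U := by
    intro U h1 h2
    exact Finset.inf'_le id (Finset.mem_filter.mpr ⟨Finset.mem_powerset.mpr (Finset.subset_univ U), h1, h2⟩)
  -- the family of xbar-tight sets avoiding e
  set Tw : Finset (Finset E) :=
    Finset.univ.powerset.filter (fun U => e ∉ U ∧ ∑ g ∈ U, xbar g = ρ U) with hTw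
  have hempty : (∅ : Finset E) ∈ Tw := by
    simp [hTw, Finset.mem_filter, hnorm]
  have hTwne : Tw.Nonempty := ⟨_, hempty⟩
  set W : Finset E := Tw.sup' hTwne id with hWdef
  have hW : e ∉ W ∧ ∑ g ∈ W, xbar g = ρ W := by
    refine Finset.sup'_induction (p := fun U => e ∉ U ∧ ∑ g ∈ U, xbar g = ρ U) hTwne id ?_ ?_
    · intro U hU V hV
      have := (tight_lemma ρ hsub xbar hxbar U V hU.2 hV.2).1
      rw [Finset.sup_eq_union]
      refine ⟨fun hc => ?_, this⟩
      rcases Finset.mem_union.mp hc with h | h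
      · exact hU.1 h
      · exact hV.1 h
    · intro U hU
      exact (Finset.mem_filter.mp hU).2
  have hWmax : ∀ U : Finset E, e ∉ U → ∑ g ∈ U, xbar g = ρ U → U ⊆ W := by
    intro U h1 h2
    exact Finset.le_sup' id (Finset.mem_filter.mpr ⟨Finset.mem_powerset.mpr (Finset.subset_univ U), h1, h2⟩)
  -- find the element f
  have hfex : ∃ f ∈ S, f ≠ e ∧ xbar f < x f ∧ f ∉ W := by
    by_contra hcon
    push_neg at hcon
    -- then on S \ W, xbar dominates x, strictly at e
    have heSW : e ∈ S \ W := Finset.mem_sdiff.mpr ⟨hS.1, hW.1⟩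
    have hlt : ∑ g ∈ S \ W, x g < ∑ g ∈ S \ W, xbar g := by
      refine Finset.sum_lt_sum ?_ ⟨e, heSW, he⟩
      intro i hi
      rcases Finset.mem_sdiff.mp hi with ⟨hiS, hiW⟩
      by_cases hie : i = e
      · subst hie; exact le_of_lt he
      · by_contra hlt'
        push_neg at hlt'
        exact hiW (hcon i hiS hie hlt')
    have h1 : ∑ g ∈ S ∪ W, xbar g ≤ ρ (S ∪ W) := hxbar.2.1 _
    have h2 : ρ (S ∪ W) + ρ (S ∩ W) ≤ ρ S + ρ W := hsub S W
    have h3 : ∑ g ∈ S ∩ W, x g ≤ ρ (S ∩ W) := hx.2.1 _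
    have h4 : ∑ g ∈ S ∪ W, xbar g = ∑ g ∈ W, xbar g + ∑ g ∈ S \ W, xbar g := by
      rw [Finset.union_comm, ← Finset.union_sdiff_self_eq_union,
        Finset.sum_union Finset.disjoint_sdiff]
    have h5 : ∑ g ∈ S, x g = ∑ g ∈ S ∩ W, x g + ∑ g ∈ S \ W, x g :=
      (Finset.sum_inter_add_sum_sdiff S W x).symm
    linarith [hS.2, hW.2]
  obtain ⟨f, hfS, hfe, hfx, hfW⟩ := hfex
  -- slack quantities
  have hxf : 0 < x f := lt_of_le_of_lt (hxbar.1 f) hfx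
  have hxbare : 0 < xbar e := lt_of_le_of_lt (hx.1 e) he
  set F1 : Finset (Finset E) := Finset.univ.powerset.filter (fun U => e ∈ U ∧ f ∉ U) with hF1
  set F2 : Finset (Finset E) := Finset.univ.powerset.filter (fun U => f ∈ U ∧ e ∉ U) with hF2
  have hF1ne : F1.Nonempty := ⟨{e}, by simp [hF1, Finset.mem_filter, hfe]⟩
  have hF2ne : F2.Nonempty := ⟨{f}, by simp [hF2, Finset.mem_filter, Ne.symm hfe]⟩
  set d1 : ℝ := F1.inf' hF1ne (fun U => ρ U - ∑ g ∈ U, x g) with hd1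
  set d2 : ℝ := F2.inf' hF2ne (fun U => ρ U - ∑ g ∈ U, xbar g) with hd2
  have hd1pos : 0 < d1 := by
    rw [hd1, Finset.lt_inf'_iff]
    intro U hU
    rcases Finset.mem_filter.mp hU with ⟨-, heU, hfU⟩
    rcases lt_or_eq_of_le (hx.2.1 U) with h | h
    · linarith
    · exact (hfU (hSmin U heU h hfS)).elim
  have hd2pos : 0 < d2 := by
    rw [hd2, Finset.lt_inf'_iff]
    intro U hU
    rcases Finset.mem_filter.mp hU with ⟨-, hfU, heU⟩
    rcases lt_or_eq_of_le (hxbar.2.1 U) with h | h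
    · linarith
    · exact (hfW (hWmax U heU h hfU)).elim
  set ε : ℝ := min (min (x f) (xbar e)) (min d1 d2) with hε
  have hεpos : 0 < ε := by
    rw [hε]
    exact lt_min (lt_min hxf hxbare) (lt_min hd1pos hd2pos)
  refine ⟨f, hfe, hfx, ε, hεpos, ?_⟩
  intro δ hδpos hδε
  constructor
  · refine move_mem ρ x hx e f (Ne.symm hfe) δ hδpos ?_ ?_
    · exact le_trans hδε (le_trans (min_le_left _ _) (min_le_left _ _))
    · intro U heU hfU
      have : d1 ≤ ρ U - ∑ g ∈ U, x g :=
        Finset.inf'_le _ (by simp [hF1, Finset.mem_filter, heU, hfU])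
      have hεd : ε ≤ d1 := le_trans (min_le_right _ _) (min_le_left _ _)
      linarith
  · refine move_mem ρ xbar hxbar f e hfe δ hδpos ?_ ?_
    · exact le_trans hδε (le_trans (min_le_left _ _) (min_le_right _ _))
    · intro U hfU heU
      have : d2 ≤ ρ U - ∑ g ∈ U, xbar g :=
        Finset.inf'_le _ (by simp [hF2, Finset.mem_filter, hfU, heU])
      have hεd : ε ≤ d2 := le_trans (min_le_right _ _) (min_le_right _ _)
      linarith


lemma intable (c : ℝ → ℝ) (hc : ContinuousOn c (Set.Ici 0)) (u v : ℝ)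
    (hu : 0 ≤ u) (hv : 0 ≤ v) : IntervalIntegrable c volume u v := by
  refine (hc.mono ?_).intervalIntegrable
  rw [Set.uIcc]
  intro t ht
  exact le_trans (le_inf hu hv) ht.1

lemma marginal_compare (ce cf : ℝ → ℝ)
    (hce_cont : ContinuousOn ce (Set.Ici 0)) (hce_mono : MonotoneOn ce (Set.Ici 0))
    (hcf_cont : ContinuousOn cf (Set.Ici 0)) (hcf_mono : MonotoneOn cf (Set.Ici 0))
    (a b : ℝ) (ha : 0 ≤ a) (hb : 0 < b) (ε₀ : ℝ) (hε₀ : 0 < ε₀) (hε₀b : ε₀ ≤ b)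
    (h : ∀ ε : ℝ, 0 < ε → ε ≤ ε₀ → ∫ t in (b-ε)..b, cf t ≤ ∫ t in a..(a+ε), ce t) :
    cf b ≤ ce a := by
  have step : ∀ ε : ℝ, 0 < ε → ε ≤ ε₀ → cf (b - ε) ≤ ce (a + ε) := by
    intro ε hε hεε₀
    have hbε : (0:ℝ) ≤ b - ε := by linarith
    have h1 : ε * cf (b - ε) ≤ ∫ t in (b-ε)..b, cf t := by
      have hint := intable cf hcf_cont (b-ε) b hbε (le_of_lt hb)
      have hconst : ∫ _ in (b-ε)..b, cf (b-ε) = ε * cf (b - ε) := by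
        rw [intervalIntegral.integral_const, smul_eq_mul]; ring
      calc ε * cf (b - ε) = ∫ _ in (b-ε)..b, cf (b-ε) := hconst.symm
        _ ≤ ∫ t in (b-ε)..b, cf t := by
            refine intervalIntegral.integral_mono_on (by linarith)
              intervalIntegrable_const hint ?_
            intro t ht
            exact hcf_mono (Set.mem_Ici.mpr hbε) (Set.mem_Ici.mpr (le_trans hbε ht.1)) ht.1
    have h2 : (∫ t in a..(a+ε), ce t) ≤ ε * ce (a + ε) := by
      have hint := intable ce hce_cont a (a+ε) ha (by linarith)
      have hconst : ∫ _ in a..(a+ε), ce (a+ε) = ε * ce (a + ε) := by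
        rw [intervalIntegral.integral_const, smul_eq_mul]; ring
      calc (∫ t in a..(a+ε), ce t) ≤ ∫ _ in a..(a+ε), ce (a+ε) := by
            refine intervalIntegral.integral_mono_on (by linarith)
              hint intervalIntegrable_const ?_
            intro t ht
            exact hce_mono (Set.mem_Ici.mpr (le_trans ha ht.1)) (Set.mem_Ici.mpr (by linarith)) ht.2
        _ = ε * ce (a + ε) := hconst
    have := h ε hε hεε₀
    nlinarith
  have hf : Filter.Tendsto (fun ε => cf (b - ε)) (nhdsWithin 0 (Set.Ioi 0)) (nhds (cf b)) := by
    have hca : ContinuousAt cf b := hcf_cont.continuousAt (Ici_mem_nhds hb)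
    have hsub : Filter.Tendsto (fun ε : ℝ => b - ε) (nhdsWithin 0 (Set.Ioi 0)) (nhds b) := by
      have : Filter.Tendsto (fun ε : ℝ => b - ε) (nhds 0) (nhds (b - 0)) :=
        (continuous_const.sub continuous_id).tendsto 0
      simpa using this.mono_left nhdsWithin_le_nhds
    exact hca.tendsto.comp hsub
  have hg : Filter.Tendsto (fun ε => ce (a + ε)) (nhdsWithin 0 (Set.Ioi 0)) (nhds (ce a)) := by
    have hca : ContinuousWithinAt ce (Set.Ici 0) a := hce_cont a ha
    have hsub : Filter.Tendsto (fun ε : ℝ => a + ε) (nhdsWithin 0 (Set.Ioi 0))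
        (nhdsWithin a (Set.Ici 0)) := by
      rw [tendsto_nhdsWithin_iff]
      constructor
      · have : Filter.Tendsto (fun ε : ℝ => a + ε) (nhds 0) (nhds (a + 0)) :=
          (continuous_const.add continuous_id).tendsto 0
        simpa using this.mono_left nhdsWithin_le_nhds
      · filter_upwards [self_mem_nhdsWithin] with ε (hε : ε ∈ Set.Ioi 0)
        simp only [Set.mem_Ici]
        linarith [Set.mem_Ioi.mp hε]
    exact hca.tendsto.comp hsub
  refine le_of_tendsto_of_tendsto hf hg ?_
  filter_upwards [Ioc_mem_nhdsGT_of_mem ⟨le_refl 0, hε₀⟩] with ε hε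
  exact step ε hε.1 hε.2

lemma beckmann_diff {E : Type*} [Fintype E] [DecidableEq E] (c : E → ℝ → ℝ)
    (hc_cont : ∀ e, ContinuousOn (c e) (Set.Ici 0))
    (z : E → ℝ) (e f : E) (hef : e ≠ f) (ε : ℝ) (hε : 0 < ε)
    (hze : 0 ≤ z e) (hzf : ε ≤ z f) :
    beckmann c (fun g => z g + (if g = e then ε else 0) - (if g = f then ε else 0))
      = beckmann c z + (∫ t in (z e)..(z e + ε), c e t)
        - ∫ t in (z f - ε)..(z f), c f t := by
  set y : E → ℝ := fun g => z g + (if g = e then ε else 0) - (if g = f then ε else 0) with hy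
  set F : E → ℝ := fun g => ∫ t in (0:ℝ)..(y g), c g t with hF
  set G : E → ℝ := fun g => ∫ t in (0:ℝ)..(z g), c g t with hG
  have hzf0 : (0:ℝ) ≤ z f := le_trans (le_of_lt hε) hzf
  have hkey : ∑ g, F g - ∑ g, G g = (F e - G e) + (F f - G f) := by
    rw [← Finset.sum_sub_distrib]
    have hzero : ∀ g ∈ Finset.univ, g ∉ ({e, f} : Finset E) → F g - G g = 0 := by
      intro g _ hg
      simp only [Finset.mem_insert, Finset.mem_singleton] at hg
      push_neg at hg
      have : y g = z g := by simp [hy, hg.1, hg.2]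
      rw [hF, hG]; simp only; rw [this]; ring
    rw [← Finset.sum_subset (Finset.subset_univ {e, f}) hzero, Finset.sum_pair hef]
  have hye : y e = z e + ε := by simp [hy, hef]
  have hyf : y f = z f - ε := by simp [hy, Ne.symm hef]
  have hFe : F e - G e = ∫ t in (z e)..(z e + ε), c e t := by
    have h1 := intervalIntegral.integral_add_adjacent_intervals
      (intable (c e) (hc_cont e) 0 (z e) le_rfl hze)
      (intable (c e) (hc_cont e) (z e) (z e + ε) hze (by linarith))
    rw [hF, hG]; simp only; rw [hye]; linarith
  have hFf : F f - G f = -∫ t in (z f - ε)..(z f), c f t := by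
    have h1 := intervalIntegral.integral_add_adjacent_intervals
      (intable (c f) (hc_cont f) 0 (z f - ε) le_rfl (by linarith))
      (intable (c f) (hc_cont f) (z f - ε) (z f) (by linarith) hzf0)
    rw [hF, hG]; simp only; rw [hyf]; linarith
  have : beckmann c y = ∑ g, F g := rfl
  have h2 : beckmann c z = ∑ g, G g := rfl
  rw [this, h2] at *
  linarith

theorem stmt1 {E : Type*} [Fintype E] [DecidableEq E] (ρ : Finset E → ℝ)
    (hsub : ∀ U V : Finset E, ρ (U ∪ V) + ρ (U ∩ V) ≤ ρ U + ρ V)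
    (hmono : ∀ U V : Finset E, U ⊆ V → ρ U ≤ ρ V)
    (hnorm : ρ ∅ = 0)
    (c cbar : E → ℝ → ℝ)
    (hc_cont : ∀ e, ContinuousOn (c e) (Set.Ici 0))
    (hc_mono : ∀ e, MonotoneOn (c e) (Set.Ici 0))
    (hc_nonneg : ∀ e, ∀ t ∈ Set.Ici (0:ℝ), 0 ≤ c e t)
    (hcbar_cont : ∀ e, ContinuousOn (cbar e) (Set.Ici 0))
    (hcbar_mono : ∀ e, MonotoneOn (cbar e) (Set.Ici 0))
    (hcbar_nonneg : ∀ e, ∀ t ∈ Set.Ici (0:ℝ), 0 ≤ cbar e t)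
    (hle : ∀ e, ∀ t ∈ Set.Ici (0:ℝ), cbar e t ≤ c e t)
    (x xbar : E → ℝ)
    (hx : x ∈ basePolytope ρ) (hxmin : ∀ y ∈ basePolytope ρ, beckmann c x ≤ beckmann c y)
    (hxbar : xbar ∈ basePolytope ρ)
    (hxbarmin : ∀ y ∈ basePolytope ρ, beckmann cbar xbar ≤ beckmann cbar y) :
    ∀ e, cbar e (xbar e) ≤ c e (x e) := by
  intro e
  by_cases hcase : xbar e ≤ x e
  · exact le_trans (hcbar_mono e (Set.mem_Ici.mpr (hxbar.1 e)) (Set.mem_Ici.mpr (hx.1 e)) hcase)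
      (hle e _ (Set.mem_Ici.mpr (hx.1 e)))
  · push_neg at hcase
    obtain ⟨f, hfe, hfx, ε, hεpos, hexch⟩ := exchange ρ hsub hnorm x xbar hx hxbar e hcase
    have hεxf : ε ≤ x f := by
      have := ((hexch ε hεpos le_rfl).1).1 f
      simp only [if_neg hfe, if_pos rfl, if_true] at this
      linarith
    have hεxbare : ε ≤ xbar e := by
      have := ((hexch ε hεpos le_rfl).2).1 e
      simp only [if_neg (Ne.symm hfe), if_pos rfl, if_true] at this
      linarith
    have hc1 : c f (x f) ≤ c e (x e) := by
      refine marginal_compare (c e) (c f) (hc_cont e) (hc_mono e) (hc_cont f) (hc_mono f)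
        (x e) (x f) (hx.1 e) (lt_of_lt_of_le hεpos hεxf) ε hεpos hεxf ?_
      intro δ hδ hδε
      have hmem := (hexch δ hδ hδε).1
      have hdiff := beckmann_diff c hc_cont x e f (Ne.symm hfe) δ hδ (hx.1 e)
        (le_trans hδε hεxf)
      have hmin := hxmin _ hmem
      rw [hdiff] at hmin
      linarith
    have hc2 : cbar e (xbar e) ≤ cbar f (xbar f) := by
      refine marginal_compare (cbar f) (cbar e) (hcbar_cont f) (hcbar_mono f)
        (hcbar_cont e) (hcbar_mono e)
        (xbar f) (xbar e) (hxbar.1 f) (lt_of_lt_of_le hεpos hεxbare) ε hεpos hεxbare ?_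
      intro δ hδ hδε
      have hmem := (hexch δ hδ hδε).2
      have hdiff := beckmann_diff cbar hcbar_cont xbar f e hfe δ hδ (hxbar.1 f)
        (le_trans hδε hεxbare)
      have hmin := hxbarmin _ hmem
      rw [hdiff] at hmin
      linarith
    calc cbar e (xbar e) ≤ cbar f (xbar f) := hc2
      _ ≤ c f (xbar f) := hle f _ (Set.mem_Ici.mpr (hxbar.1 f))
      _ ≤ c f (x f) := hc_mono f (Set.mem_Ici.mpr (hxbar.1 f)) (Set.mem_Ici.mpr (hx.1 f))
          (le_of_lt hfx)
      _ ≤ c e (x e) := hc1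
end

section
/- Let $Q_1, \ldots, Q_k \subseteq \mathbb{R}^E$ be polytopes and $Q = \sum_{i=1}^k Q_i$ their Minkowski sum. Then a nonzero vector $w$ is an edge direction of $Q$ if and only if $w$ is an edge direction of $Q_i$ for some $i$. -/
open Finset Pointwise

/-- `segment ℝ u v` (with `u ≠ v`) is a (bounded) edge of `Q` when it is an extreme
subset of `Q`, i.e. a one-dimensional face. -/
def IsEdgeOf {V : Type*} [AddCommGroup V] [Module ℝ V] (Q : Set V) (u v : V) : Prop :=
  u ≠ v ∧ IsExtreme ℝ Q (segment ℝ u v)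

/-- `w` is an edge direction of `Q` if some edge of `Q` is parallel to `w`. -/
def IsEdgeDirOf {V : Type*} [AddCommGroup V] [Module ℝ V] (Q : Set V) (w : V) : Prop :=
  ∃ u v, IsEdgeOf Q u v ∧ ∃ t : ℝ, t ≠ 0 ∧ v - u = t • w

/-!
If `[u, v]` is an edge of `A + B`, then `A ∩ ([u, v] - B)` is an extreme subset of `A`; by
extremality, any two of its points differ by a vector of `[u, v] - [u, v]`, so it is a compact
convex subset of a line parallel to `v - u`, i.e. a segment. The same holds in `B`, and as
`u ≠ v` one of the two segments is nondegenerate.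

Conversely, let `[u, v]` be an edge of the polytope `A`, parallel to `w`, and let `π` be a
projection with kernel `ℝ ∙ w`. Then `π u` is a vertex of the polytope `π A`, hence exposed by
some functional `l`. For an extreme point `p` of the face of `π B` maximising `l`, the point
`π u + p` is extreme in `π (A + B)`, so its fibre in `A + B` is an extreme subset lying on a line
parallel to `w`; it contains `[u, v] + b` for any `b ∈ B` above `p`, so it is an edge
parallel to `w`.
-/

open Set AffineMap

section Linear

variable {V W : Type*} [AddCommGroup V] [Module ℝ V] [AddCommGroup W] [Module ℝ W]

theorem sub_mem_span_of_mem_segment {u v x y : V} (hx : x ∈ segment ℝ u v)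
    (hy : y ∈ segment ℝ u v) : x - y ∈ ℝ ∙ (v - u) := by
  rw [segment_eq_image'] at hx hy
  obtain ⟨θ, -, rfl⟩ := hx
  obtain ⟨θ', -, rfl⟩ := hy
  exact Submodule.mem_span_singleton.2 ⟨θ - θ', by module⟩

theorem IsExtreme.mem_segment_of_sub_mem_span {A : Set V} {u v z : V}
    (h : IsExtreme ℝ A (segment ℝ u v)) (hz : z ∈ A) (hzu : z - u ∈ ℝ ∙ (v - u)) :
    z ∈ segment ℝ u v := by
  obtain ⟨s, hs⟩ := Submodule.mem_span_singleton.1 hzu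
  have hzs : lineMap u v s = z := by
    rw [lineMap_apply, vsub_eq_sub, vadd_eq_add, hs, sub_add_cancel]
  have hmap : ∀ {a b c : ℝ}, b ∈ openSegment ℝ a c →
      lineMap u v b ∈ openSegment ℝ (lineMap u v a) (lineMap u v c) := fun hb => by
    rw [← image_openSegment]; exact mem_image_of_mem _ hb
  have hu := h.1 (left_mem_segment ℝ u v)
  have hv := h.1 (right_mem_segment ℝ u v)
  rcases lt_or_ge s 0 with hs0 | hs0
  · have hopen := hmap (openSegment_eq_Ioo (hs0.trans one_pos) ▸ ⟨hs0, one_pos⟩ :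
      (0 : ℝ) ∈ openSegment ℝ s 1)
    rw [lineMap_apply_zero, lineMap_apply_one, hzs] at hopen
    exact h.2 hz hv (left_mem_segment ℝ u v) hopen
  rcases le_or_gt s 1 with hs1 | hs1
  · rw [segment_eq_image_lineMap]
    exact ⟨s, ⟨hs0, hs1⟩, hzs⟩
  · have hopen := hmap (openSegment_eq_Ioo (one_pos.trans hs1) ▸ ⟨one_pos, hs1⟩ :
      (1 : ℝ) ∈ openSegment ℝ 0 s)
    rw [lineMap_apply_zero, lineMap_apply_one, hzs] at hopen
    exact h.right_mem_of_mem_openSegment hu hz (right_mem_segment ℝ u v) hopen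

theorem IsExtreme.inter_preimage (π : V →ₗ[ℝ] W) {S : Set V} {T : Set W}
    (h : IsExtreme ℝ (π '' S) T) : IsExtreme ℝ S (S ∩ π ⁻¹' T) := by
  refine ⟨inter_subset_left, fun x₁ hx₁ x₂ hx₂ x hx hx12 => ?_⟩
  have hπx : π x ∈ openSegment ℝ (π x₁) (π x₂) := by
    rw [← π.coe_toAffineMap, ← image_openSegment]; exact mem_image_of_mem _ hx12
  exact ⟨hx₁, h.2 (mem_image_of_mem π hx₁) (mem_image_of_mem π hx₂) hx.2 hπx⟩

theorem IsExtreme.mem_extremePoints_image (π : V →ₗ[ℝ] W) {A : Set V} {u v : V}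
    (hπ : LinearMap.ker π = ℝ ∙ (v - u)) (hA : Convex ℝ A) (h : IsExtreme ℝ A (segment ℝ u v)) :
    π u ∈ (π '' A).extremePoints ℝ := by
  have hπv : π v = π u := by
    rw [← sub_eq_zero, ← map_sub, ← LinearMap.mem_ker, hπ]
    exact Submodule.mem_span_singleton_self _
  have hseg : ∀ x ∈ segment ℝ u v, π x = π u := fun x hx => by
    have : π x ∈ π.toAffineMap '' segment ℝ u v := mem_image_of_mem _ hx
    rwa [image_segment, LinearMap.coe_toAffineMap, hπv, segment_same] at this
  refine ⟨mem_image_of_mem π (h.1 (left_mem_segment ℝ u v)), ?_⟩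
  rintro _ ⟨x₁, hx₁, rfl⟩ _ ⟨x₂, hx₂, rfl⟩ ⟨a, b, ha, hb, hab, hx⟩
  have hz : a • x₁ + b • x₂ ∈ segment ℝ u v := by
    refine h.mem_segment_of_sub_mem_span (hA hx₁ hx₂ ha.le hb.le hab) ?_
    rw [← hπ, LinearMap.mem_ker, map_sub, map_add, map_smul, map_smul, hx, sub_self]
  exact hseg _ (h.2 hx₁ hx₂ hz ⟨a, b, ha, hb, hab, rfl⟩)

theorem IsExtreme.inter_sub {A B F : Set V} (h : IsExtreme ℝ (A + B) F) :
    IsExtreme ℝ A (A ∩ (F - B)) := by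
  refine ⟨inter_subset_left, ?_⟩
  rintro x₁ hx₁ x₂ hx₂ _ ⟨-, f, hf, b, hb, rfl⟩ hx12
  have hopen : f ∈ openSegment ℝ (x₁ + b) (x₂ + b) := by
    simpa [add_comm _ b] using (mem_openSegment_translate ℝ b).2 hx12
  exact ⟨hx₁, _, h.2 (add_mem_add hx₁ hb) (add_mem_add hx₂ hb) hf hopen, b, hb,
    add_sub_cancel_right _ _⟩

theorem IsExtreme.add_mem_of_add_mem {A B F : Set V} (h : IsExtreme ℝ (A + B) F)
    (hF : Convex ℝ F) {a a' b b' : V} (ha : a ∈ A) (ha' : a' ∈ A) (hb : b ∈ B) (hb' : b' ∈ B)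
    (h₁ : a + b ∈ F) (h₂ : a' + b' ∈ F) : a + b' ∈ F := by
  have hmid : (1 / 2 : ℝ) • (a + b) + (1 / 2 : ℝ) • (a' + b') ∈ F :=
    hF h₁ h₂ (by norm_num) (by norm_num) (by norm_num)
  have hopen : (1 / 2 : ℝ) • (a + b) + (1 / 2 : ℝ) • (a' + b') ∈
      openSegment ℝ (a + b') (a' + b) :=
    ⟨1 / 2, 1 / 2, by norm_num, by norm_num, by norm_num, by module⟩
  exact h.2 (add_mem_add ha hb') (add_mem_add ha' hb) hmid hopen

theorem not_isEdgeDirOf_zero (w : V) : ¬ IsEdgeDirOf (0 : Set V) w := by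
  rintro ⟨u, v, ⟨huv, hF⟩, -⟩
  have hu := hF.1 (left_mem_segment ℝ u v)
  have hv := hF.1 (right_mem_segment ℝ u v)
  rw [Set.mem_zero] at hu hv
  exact huv (hu.trans hv.symm)

end Linear

section Normed

variable {V W : Type*} [NormedAddCommGroup V] [NormedSpace ℝ V]
  [NormedAddCommGroup W] [NormedSpace ℝ W]

theorem IsCompact.exists_eq_segment {S : Set V} {w : V} (hS : IsCompact S) (hconv : Convex ℝ S)
    (hne : S.Nonempty) (hw : w ≠ 0) (hline : ∀ x ∈ S, ∀ y ∈ S, x - y ∈ ℝ ∙ w) :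
    ∃ a b, S = segment ℝ a b := by
  obtain ⟨φ, -, hφw⟩ := exists_dual_vector ℝ w (norm_ne_zero_iff.2 hw)
  obtain ⟨a, ha, hmin⟩ := hS.exists_isMinOn hne φ.continuous.continuousOn
  obtain ⟨b, hb, hmax⟩ := hS.exists_isMaxOn hne φ.continuous.continuousOn
  refine ⟨a, b, Subset.antisymm (fun x hx => ?_) (hconv.segment_subset ha hb)⟩
  obtain ⟨z, hz, hφz⟩ := (convex_segment a b).isPreconnected.intermediate_value
    (left_mem_segment ℝ a b) (right_mem_segment ℝ a b) φ.continuous.continuousOn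
    ⟨hmin hx, hmax hx⟩
  -- `φ` is injective on the line since it does not vanish on its direction
  obtain ⟨c, hc⟩ := Submodule.mem_span_singleton.1
    (hline x hx z (hconv.segment_subset ha hb hz))
  have hc0 : c = 0 := by
    have := congrArg φ hc
    rw [map_smul, map_sub, hφz, sub_self, smul_eq_mul, hφw] at this
    exact (mul_eq_zero.1 this).resolve_right (norm_ne_zero_iff.2 hw)
  rw [hc0, zero_smul, eq_comm, sub_eq_zero] at hc
  rwa [hc]

theorem IsExtreme.isEdgeDirOf {X S : Set V} {w x y : V} (hS : IsExtreme ℝ X S)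
    (hcomp : IsCompact S) (hconv : Convex ℝ S) (hline : ∀ x ∈ S, ∀ y ∈ S, x - y ∈ ℝ ∙ w)
    (hx : x ∈ S) (hy : y ∈ S) (hxy : x ≠ y) : IsEdgeDirOf X w := by
  have hw : w ≠ 0 := by
    rintro rfl
    have := hline x hx y hy
    rw [Submodule.span_singleton_eq_bot.2 rfl, Submodule.mem_bot, sub_eq_zero] at this
    exact hxy this
  obtain ⟨a, b, rfl⟩ := hcomp.exists_eq_segment hconv ⟨x, hx⟩ hw hline
  have hab : a ≠ b := by
    rintro rfl
    rw [segment_same, mem_singleton_iff] at hx hy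
    exact hxy (hx.trans hy.symm)
  obtain ⟨t, ht⟩ := Submodule.mem_span_singleton.1
    (hline b (right_mem_segment ℝ a b) a (left_mem_segment ℝ a b))
  refine ⟨a, b, ⟨hab, hS⟩, t, ?_, ht.symm⟩
  rintro rfl
  exact hab (sub_eq_zero.1 (by rw [← ht, zero_smul])).symm

theorem IsExtreme.isEdgeDirOf_of_add {A B F : Set V} {w a a' b b' : V}
    (hA : IsCompact A) (hAc : Convex ℝ A) (hB : IsClosed B) (hBc : Convex ℝ B)
    (hF : IsExtreme ℝ (A + B) F) (hFc : IsCompact F) (hFcv : Convex ℝ F)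
    (hline : ∀ x ∈ F, ∀ y ∈ F, x - y ∈ ℝ ∙ w) (ha : a ∈ A) (ha' : a' ∈ A) (hb : b ∈ B)
    (hb' : b' ∈ B) (h₁ : a + b ∈ F) (h₂ : a' + b' ∈ F) (hne : a ≠ a') : IsEdgeDirOf A w := by
  have hcomp : IsCompact (A ∩ (F - B)) := by
    refine hA.inter_right ?_
    rw [sub_eq_add_neg]
    exact hB.neg.add_left_of_isCompact hFc
  have hline' : ∀ x ∈ A ∩ (F - B), ∀ y ∈ A ∩ (F - B), x - y ∈ ℝ ∙ w := by
    rintro _ ⟨hx, f, hf, c, hc, rfl⟩ _ ⟨hy, f', hf', c', hc', rfl⟩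
    have hxc : f - c + c' ∈ F := hF.add_mem_of_add_mem hFcv hx hy hc hc' (by simpa using hf)
      (by simpa using hf')
    have := hline _ hxc _ (by simpa using hf' : f' - c' + c' ∈ F)
    rwa [show f - c + c' - (f' - c' + c') = f - c - (f' - c') by abel] at this
  exact hF.inter_sub.isEdgeDirOf hcomp (hAc.inter (hFcv.sub hBc)) hline'
    ⟨ha, _, h₁, b, hb, add_sub_cancel_right a b⟩ ⟨ha', _, h₂, b', hb', add_sub_cancel_right a' b'⟩
    hne

theorem IsEdgeDirOf.of_add {A B : Set V} {w : V} (hA : IsCompact A) (hAc : Convex ℝ A)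
    (hB : IsCompact B) (hBc : Convex ℝ B) (h : IsEdgeDirOf (A + B) w) :
    IsEdgeDirOf A w ∨ IsEdgeDirOf B w := by
  obtain ⟨u, v, ⟨huv, hF⟩, t, -, ht⟩ := h
  have hFc : IsCompact (segment ℝ u v) := by
    rw [← convexHull_pair]; exact (toFinite _).isCompact_convexHull ℝ
  have hline : ∀ x ∈ segment ℝ u v, ∀ y ∈ segment ℝ u v, x - y ∈ ℝ ∙ w := fun x hx y hy =>
    (Submodule.span_singleton_le_iff_mem _ _).2 (ht ▸ Submodule.smul_mem _ t
      (Submodule.mem_span_singleton_self w)) (sub_mem_span_of_mem_segment hx hy)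
  obtain ⟨a, ha, b, hb, hab⟩ := hF.1 (left_mem_segment ℝ u v)
  obtain ⟨a', ha', b', hb', hab'⟩ := hF.1 (right_mem_segment ℝ u v)
  have h₁ : a + b ∈ segment ℝ u v := hab ▸ left_mem_segment ℝ u v
  have h₂ : a' + b' ∈ segment ℝ u v := hab' ▸ right_mem_segment ℝ u v
  by_cases haa : a = a'
  · refine .inr ((add_comm A B ▸ hF).isEdgeDirOf_of_add hB hBc hA.isClosed hAc hFc
      (convex_segment u v) hline hb hb' ha ha' (add_comm a b ▸ h₁) (add_comm a' b' ▸ h₂) ?_)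
    rintro rfl
    exact huv (hab.symm.trans (haa ▸ hab'))
  · exact .inl (hF.isEdgeDirOf_of_add hA hAc hB.isClosed hBc hFc (convex_segment u v) hline
      ha ha' hb hb' h₁ h₂ haa)

theorem exists_ker_eq_span_singleton {w : V} (hw : w ≠ 0) :
    ∃ π : V →L[ℝ] V, LinearMap.ker (π : V →ₗ[ℝ] V) = ℝ ∙ w := by
  obtain ⟨g, -, hgw⟩ := exists_dual_vector ℝ w (norm_ne_zero_iff.2 hw)
  set φ := ‖w‖⁻¹ • g
  have hφw : φ w = 1 := by
    simp [φ, hgw, norm_ne_zero_iff.2 hw]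
  refine ⟨.id ℝ V - φ.smulRight w, le_antisymm (fun x hx => ?_) ?_⟩
  · have : x - φ x • w = 0 := hx
    exact Submodule.mem_span_singleton.2 ⟨φ x, (sub_eq_zero.1 this).symm⟩
  · rw [Submodule.span_singleton_le_iff_mem, LinearMap.mem_ker]
    show w - φ w • w = 0
    rw [hφw, one_smul, sub_self]

theorem Set.Finite.extremePoints_convexHull_subset_exposedPoints {S : Set W} (hS : S.Finite) :
    (convexHull ℝ S).extremePoints ℝ ⊆ (convexHull ℝ S).exposedPoints ℝ := by
  intro x hx
  refine ⟨hx.1, ?_⟩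
  rcases (S \ {x}).eq_empty_or_nonempty with hT | hT
  · refine ⟨0, fun y hy => ⟨le_rfl, fun _ => ?_⟩⟩
    exact convexHull_min (sdiff_eq_empty.1 hT) (convex_singleton x) hy
  have hxT : x ∉ convexHull ℝ (S \ {x}) := fun h =>
    ((convex_convexHull ℝ S).mem_extremePoints_iff_mem_sdiff_convexHull_sdiff.1 hx).2
      (convexHull_mono (sdiff_subset_sdiff_left (subset_convexHull ℝ S)) h)
  obtain ⟨l, c, hlc, hcx⟩ := geometric_hahn_banach_closed_point (convex_convexHull ℝ _)
    (hS.sdiff.isCompact_convexHull ℝ).isClosed hxT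
  refine ⟨l, fun y hy => ?_⟩
  rw [← insert_eq_of_mem (extremePoints_convexHull_subset hx), ← insert_sdiff_singleton,
    convexHull_insert hT, mem_convexJoin] at hy
  obtain ⟨_, rfl, z, hz, a, b, ha, hb, hab, rfl⟩ := hy
  obtain rfl : a = 1 - b := by linarith
  have hlz := (hlc z hz).trans hcx
  simp only [map_add, map_smul, smul_eq_mul]
  refine ⟨by nlinarith, fun hle => ?_⟩
  obtain rfl : b = 0 := by nlinarith
  simp

theorem add_mem_extremePoints_add {A B : Set W} {x p : W} {l : StrongDual ℝ W} (hx : x ∈ A)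
    (hl : ∀ y ∈ A, l y ≤ l x ∧ (l x ≤ l y → y = x))
    (hp : p ∈ (l.toExposed B).extremePoints ℝ) : x + p ∈ (A + B).extremePoints ℝ := by
  obtain ⟨⟨hpB, hpmax⟩, hpext⟩ := hp
  refine ⟨add_mem_add hx hpB, ?_⟩
  rintro _ ⟨a₁, ha₁, b₁, hb₁, rfl⟩ _ ⟨a₂, ha₂, b₂, hb₂, rfl⟩ ⟨s, t, hs, ht, hst, hsum⟩
  have hlsum := congrArg l hsum
  simp only [map_add, map_smul, smul_eq_mul] at hlsum
  obtain rfl : t = 1 - s := by linarith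
  have h₁ := hl a₁ ha₁
  have h₂ := hl a₂ ha₂
  have k₁ := hpmax b₁ hb₁
  have k₂ := hpmax b₂ hb₂
  have hb₁' : b₁ ∈ l.toExposed B := ⟨hb₁, fun y hy => (hpmax y hy).trans (by nlinarith)⟩
  have e₁ := h₁.2 (by nlinarith)
  have e₂ := h₂.2 (by nlinarith)
  have hb₂' : b₂ ∈ l.toExposed B := ⟨hb₂, fun y hy => (hpmax y hy).trans (by nlinarith)⟩
  have hopen : p ∈ openSegment ℝ b₁ b₂ := by
    refine ⟨s, 1 - s, hs, ht, hst, add_left_cancel (a := x) ?_⟩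
    rw [← hsum, e₁, e₂]
    module
  rw [hpext hb₁' hb₂' hopen, e₁]

theorem IsEdgeDirOf.add_right {S B : Set V} {w : V} (hS : S.Finite) (hB : IsCompact B)
    (hBc : Convex ℝ B) (hBne : B.Nonempty) (h : IsEdgeDirOf (convexHull ℝ S) w) :
    IsEdgeDirOf (convexHull ℝ S + B) w := by
  obtain ⟨u, v, ⟨huv, hF⟩, t, ht, hvu⟩ := h
  have hw : w ≠ 0 := by
    rintro rfl
    rw [smul_zero, sub_eq_zero] at hvu
    exact huv hvu.symm
  obtain ⟨π, hπ⟩ := exists_ker_eq_span_singleton hw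
  have hker : LinearMap.ker (π : V →ₗ[ℝ] V) = ℝ ∙ (v - u) := by
    rw [hvu, Submodule.span_singleton_smul_eq (IsUnit.mk0 t ht), hπ]
  have hπu : π u ∈ (convexHull ℝ (π '' S)).exposedPoints ℝ := by
    have := hF.mem_extremePoints_image _ hker (convex_convexHull ℝ S)
    rw [LinearMap.image_convexHull] at this
    exact (hS.image π).extremePoints_convexHull_subset_exposedPoints this
  obtain ⟨hπuA, l, hl⟩ := hπu
  have hBπ : IsCompact (π '' B) := hB.image π.continuous
  obtain ⟨q, hq, hqmax⟩ := hBπ.exists_isMaxOn (hBne.image π) l.continuous.continuousOn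
  obtain ⟨p, hp⟩ := (ContinuousLinearMap.toExposed.isExposed.isCompact hBπ).extremePoints_nonempty
    ⟨q, hq, isMaxOn_iff.1 hqmax⟩
  have hup : π u + p ∈ (π '' (convexHull ℝ S + B)).extremePoints ℝ := by
    rw [Set.image_add, ← ContinuousLinearMap.coe_coe, LinearMap.image_convexHull]
    exact add_mem_extremePoints_add hπuA hl hp
  obtain ⟨b, hb, rfl⟩ := hp.1.1
  have hπv : π v = π u := by
    rw [← sub_eq_zero, ← map_sub]
    exact (LinearMap.mem_ker (f := (π : V →ₗ[ℝ] V))).1 (hker ▸ Submodule.mem_span_singleton_self _)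
  have hA : IsCompact (convexHull ℝ S + B) := (hS.isCompact_convexHull ℝ).add hB
  refine (isExtreme_singleton.2 hup).inter_preimage (π : V →ₗ[ℝ] V) |>.isEdgeDirOf
    (x := u + b) (y := v + b) (hA.inter_right ((isClosed_singleton).preimage π.continuous))
    (((convex_convexHull ℝ S).add hBc).inter ((convex_singleton _).linear_preimage _))
    ?_ ⟨add_mem_add (hF.1 (left_mem_segment ℝ u v)) hb, by simp⟩
    ⟨add_mem_add (hF.1 (right_mem_segment ℝ u v)) hb, by simp [hπv]⟩ (by simpa using huv)
  rintro x ⟨-, hx⟩ y ⟨-, hy⟩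
  rw [← hπ, LinearMap.mem_ker, map_sub]
  exact sub_eq_zero.2 (hx.trans hy.symm)

end Normed

def IsPolytope {V : Type*} [AddCommGroup V] [Module ℝ V] (P : Set V) : Prop :=
  ∃ S : Finset V, (S : Set V).Nonempty ∧ P = convexHull ℝ (S : Set V)

section Polytope

variable {V : Type*} [AddCommGroup V] [Module ℝ V]

theorem isPolytope_zero : IsPolytope (0 : Set V) :=
  ⟨{0}, by simp, by rw [Finset.coe_singleton, convexHull_singleton, Set.singleton_zero]⟩

theorem IsPolytope.add {A B : Set V} (hA : IsPolytope A) (hB : IsPolytope B) :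
    IsPolytope (A + B) := by
  obtain ⟨S, hS, rfl⟩ := hA
  obtain ⟨T, hT, rfl⟩ := hB
  classical
  exact ⟨S + T, by simpa using hS.add hT, by rw [Finset.coe_add, convexHull_add]⟩

theorem isPolytope_sum {ι : Type*} (s : Finset ι) {P : ι → Set V}
    (h : ∀ i ∈ s, IsPolytope (P i)) : IsPolytope (∑ i ∈ s, P i) :=
  Finset.sum_induction P IsPolytope (fun _ _ => IsPolytope.add) isPolytope_zero h

end Polytope

theorem isEdgeDirOf_add_iff {V : Type*} [NormedAddCommGroup V] [NormedSpace ℝ V] {A B : Set V}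
    {w : V} (hA : IsPolytope A) (hB : IsPolytope B) :
    IsEdgeDirOf (A + B) w ↔ IsEdgeDirOf A w ∨ IsEdgeDirOf B w := by
  obtain ⟨S, hSne, rfl⟩ := hA
  obtain ⟨T, hTne, rfl⟩ := hB
  have hSc := S.finite_toSet.isCompact_convexHull ℝ
  have hTc := T.finite_toSet.isCompact_convexHull ℝ
  refine ⟨IsEdgeDirOf.of_add hSc (convex_convexHull ℝ _) hTc (convex_convexHull ℝ _), ?_⟩
  rintro (h | h)
  · exact h.add_right S.finite_toSet hTc (convex_convexHull ℝ _) hTne.convexHull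
  · rw [add_comm]
    exact h.add_right T.finite_toSet hSc (convex_convexHull ℝ _) hSne.convexHull

theorem stmt6_general {E : Type*} [Fintype E] (k : ℕ) (Q : Fin k → Set (E → ℝ))
    (hpoly : ∀ i, ∃ Vs : Finset (E → ℝ), (Vs : Set (E → ℝ)).Nonempty ∧
      Q i = convexHull ℝ (↑Vs : Set (E → ℝ)))
    (w : E → ℝ) :
    IsEdgeDirOf (∑ i : Fin k, Q i) w ↔ ∃ i, IsEdgeDirOf (Q i) w := by
  induction k with
  | zero => simpa using not_isEdgeDirOf_zero w
  | succ k ih =>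
    have htail : IsPolytope (∑ i : Fin k, Q i.succ) := isPolytope_sum _ fun i _ => hpoly i.succ
    rw [Fin.sum_univ_succ, isEdgeDirOf_add_iff (hpoly 0) htail, ih _ fun i => hpoly i.succ,
      Fin.exists_fin_succ]

theorem stmt6 {E : Type*} [Fintype E] (k : ℕ) (Q : Fin k → Set (E → ℝ))
    (hpoly : ∀ i, ∃ Vs : Finset (E → ℝ), (Vs : Set (E → ℝ)).Nonempty ∧
      Q i = convexHull ℝ (↑Vs : Set (E → ℝ)))
    (w : E → ℝ) (hw : w ≠ 0) :
    IsEdgeDirOf (∑ i : Fin k, Q i) w ↔ ∃ i, IsEdgeDirOf (Q i) w :=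
  stmt6_general k Q hpoly w
end

section
/- Let $P^{\uparrow}$ be the dominant of a Minkowski sum of $\{0,1\}$-polytopes $P_i = \mathrm{conv}\{\chi_S : S \in \mathcal{S}_i\}$ over a finite ground set $E$. Then every bounded edge of $P^{\uparrow}$ is parallel to a vector in $\{-1,0,1\}^E$ with at least two nonzero entries. -/
/-!
An edge `[u, v]` of the up-closed set `P↑` cannot be monotone: if `v ≤ u`, the point
`u + (u - v)` lies in `P↑` with `u` the midpoint of it and `v`, forcing it onto the edge beyond
its endpoint `u` (symmetrically if `u ≤ v`). So `v - u` has a positive and a negative entry,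
no two points of the edge are comparable, and hence the edge lies in `P` itself, where it is an
edge of the Minkowski sum. Splitting `P = P i + ∑_{j ≠ i} P j`, the endpoints decompose into
vertices `a, b` of some summand `P i` with `b - a` a nonzero multiple of `v - u`; as `a, b` are
characteristic vectors, `b - a ∈ {-1, 0, 1}^E`.
-/

open Finset Pointwise

/-- The dominant of a set `Q ⊆ ℝ^E`: `Q + ℝ₊^E`. -/
def dominant {E : Type*} (Q : Set (E → ℝ)) : Set (E → ℝ) :=
  {x | ∃ y ∈ Q, y ≤ x}

/-- The characteristic vector of a finite set. -/
def charVec {E : Type*} [DecidableEq E] (B : Finset E) : E → ℝ :=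
  fun e => if e ∈ B then 1 else 0

section Convex

variable {𝕜 V : Type*} [Field 𝕜] [LinearOrder 𝕜] [IsStrictOrderedRing 𝕜]
  [AddCommGroup V] [Module 𝕜 V]

lemma exists_sub_eq_smul_of_mem_segment {u v p q : V} (hp : p ∈ segment 𝕜 u v)
    (hq : q ∈ segment 𝕜 u v) : ∃ c : 𝕜, q - p = c • (v - u) := by
  rw [segment_eq_image'] at hp hq
  obtain ⟨s, -, rfl⟩ := hp
  obtain ⟨t, -, rfl⟩ := hq
  exact ⟨t - s, by module⟩

lemma mem_openSegment_self_add_sub (x y : V) : x ∈ openSegment 𝕜 y (x + (x - y)) :=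
  ⟨2⁻¹, 2⁻¹, by norm_num, by norm_num, by norm_num, by module⟩

lemma left_mem_extremePoints_segment (u v : V) : u ∈ (segment 𝕜 u v).extremePoints 𝕜 := by
  refine ⟨left_mem_segment 𝕜 u v, fun x₁ h₁ x₂ h₂ hu => ?_⟩
  rw [segment_eq_image'] at h₁ h₂
  obtain ⟨s₁, ⟨hs₁, -⟩, rfl⟩ := h₁
  obtain ⟨s₂, ⟨hs₂, -⟩, rfl⟩ := h₂
  obtain ⟨a, b, ha, hb, hab, hu⟩ := hu
  have hzero : (a * s₁ + b * s₂) • (v - u) = 0 := by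
    calc (a * s₁ + b * s₂) • (v - u)
        = a • (u + s₁ • (v - u)) + b • (u + s₂ • (v - u)) - (a + b) • u := by module
      _ = 0 := by rw [hu, hab, one_smul, sub_self]
  rcases smul_eq_zero.1 hzero with h | h
  · obtain ⟨rfl, rfl⟩ : s₁ = 0 ∧ s₂ = 0 := by
      constructor <;> nlinarith [mul_nonneg ha.le hs₁, mul_nonneg hb.le hs₂]
    simp
  · simp [h]

lemma mem_extremePoints_of_add_mem_extremePoints {A B : Set V} {a b : V} (ha : a ∈ A)
    (hb : b ∈ B) (h : a + b ∈ (A + B).extremePoints 𝕜) : a ∈ A.extremePoints 𝕜 := by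
  refine ⟨ha, fun x₁ h₁ x₂ h₂ hx => ?_⟩
  have hx' : a + b ∈ openSegment 𝕜 (x₁ + b) (x₂ + b) := by
    simpa only [add_comm _ b] using (mem_openSegment_translate 𝕜 b).2 hx
  simpa using h.2 (Set.add_mem_add h₁ hb) (Set.add_mem_add h₂ hb) hx'

/-- Exchanging the `B`-parts of the endpoints gives points `a + b'`, `a' + b` of `A + B` with the
same midpoint as `u, v`; so `a + b'` lies on the extreme segment, and `a' - a = v - (a + b')`. -/
lemma IsExtreme.exists_sub_eq_smul_of_add {A B : Set V} {a a' b b' u v : V}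
    (h : IsExtreme 𝕜 (A + B) (segment 𝕜 u v)) (ha : a ∈ A) (ha' : a' ∈ A) (hb : b ∈ B)
    (hb' : b' ∈ B) (hu : a + b = u) (hv : a' + b' = v) : ∃ c : 𝕜, a' - a = c • (v - u) := by
  subst hu hv
  have hmid : (2⁻¹ : 𝕜) • (a + b) + (2⁻¹ : 𝕜) • (a' + b') ∈ segment 𝕜 (a + b) (a' + b') :=
    ⟨2⁻¹, 2⁻¹, by norm_num, by norm_num, by norm_num, rfl⟩
  have hmid' : (2⁻¹ : 𝕜) • (a + b) + (2⁻¹ : 𝕜) • (a' + b')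
      ∈ openSegment 𝕜 (a + b') (a' + b) :=
    ⟨2⁻¹, 2⁻¹, by norm_num, by norm_num, by norm_num, by module⟩
  have hswap := h.left_mem_of_mem_openSegment (Set.add_mem_add ha hb')
    (Set.add_mem_add ha' hb) hmid hmid'
  obtain ⟨c, hc⟩ := exists_sub_eq_smul_of_mem_segment hswap (right_mem_segment 𝕜 _ _)
  exact ⟨c, by rw [← hc]; abel⟩

theorem IsExtreme.exists_extremePoints_sub_eq_smul {ι : Type*} [Fintype ι] {P : ι → Set V}
    {u v : V} (h : IsExtreme 𝕜 (∑ i, P i) (segment 𝕜 u v)) (huv : u ≠ v) :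
    ∃ i, ∃ a ∈ (P i).extremePoints 𝕜, ∃ b ∈ (P i).extremePoints 𝕜,
      ∃ t : 𝕜, t ≠ 0 ∧ v - u = t • (b - a) := by
  classical
  have hu := h.extremePoints_subset_extremePoints (left_mem_extremePoints_segment u v)
  have hv := h.extremePoints_subset_extremePoints
    (segment_symm 𝕜 u v ▸ left_mem_extremePoints_segment v u)
  obtain ⟨g, hg, rfl⟩ := (Set.mem_fintype_sum P u).1 hu.1
  obtain ⟨g', hg', rfl⟩ := (Set.mem_fintype_sum P v).1 hv.1
  obtain ⟨i, hi⟩ : ∃ i, g i ≠ g' i := by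
    by_contra! hgg'
    exact huv (Finset.sum_congr rfl fun j _ => hgg' j)
  have hP : ∑ j, P j = P i + ∑ j ∈ univ.erase i, P j := (add_sum_erase _ _ (mem_univ i)).symm
  have hgi : ∑ j, g j = g i + ∑ j ∈ univ.erase i, g j := (add_sum_erase _ _ (mem_univ i)).symm
  have hgi' : ∑ j, g' j = g' i + ∑ j ∈ univ.erase i, g' j :=
    (add_sum_erase _ _ (mem_univ i)).symm
  have hrest : ∀ x : ι → V, (∀ j, x j ∈ P j) →
      ∑ j ∈ univ.erase i, x j ∈ ∑ j ∈ univ.erase i, P j :=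
    fun x hx => Set.finsetSum_mem_finsetSum _ _ _ fun j _ => hx j
  rw [hP] at h hu hv
  rw [hgi] at hu h
  rw [hgi'] at hv h
  obtain ⟨c, hc⟩ := h.exists_sub_eq_smul_of_add (hg i) (hg' i) (hrest g hg) (hrest g' hg')
    rfl rfl
  have hc0 : c ≠ 0 := by
    rintro rfl
    exact hi (sub_eq_zero.1 (by simpa using hc)).symm
  refine ⟨i, g i, mem_extremePoints_of_add_mem_extremePoints (hg i) (hrest g hg) hu,
    g' i, mem_extremePoints_of_add_mem_extremePoints (hg' i) (hrest g' hg') hv, c⁻¹,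
    inv_ne_zero hc0, ?_⟩
  rw [hgi, hgi', hc, smul_smul, inv_mul_cancel₀ hc0, one_smul]

end Convex

section UpperSet

variable {𝕜 V : Type*} [Field 𝕜] [LinearOrder 𝕜] [IsStrictOrderedRing 𝕜]
  [AddCommGroup V] [PartialOrder V] [IsOrderedAddMonoid V] [Module 𝕜 V]
  {Q S : Set V} {u v : V}

lemma IsExtreme.mem_of_le_of_isUpperSet (hQ : IsUpperSet Q) (h : IsExtreme 𝕜 Q S) {x y : V}
    (hx : x ∈ S) (hy : y ∈ Q) (hyx : y ≤ x) : y ∈ S ∧ x + (x - y) ∈ S := by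
  have hz : x + (x - y) ∈ Q := hQ (le_add_of_nonneg_right (sub_nonneg.2 hyx)) (h.1 hx)
  exact ⟨h.left_mem_of_mem_openSegment hy hz hx (mem_openSegment_self_add_sub x y),
    h.right_mem_of_mem_openSegment hy hz hx (mem_openSegment_self_add_sub x y)⟩

lemma IsExtreme.not_le_of_isUpperSet (hQ : IsUpperSet Q) (h : IsExtreme 𝕜 Q (segment 𝕜 u v))
    (huv : u ≠ v) : ¬ v ≤ u := by
  intro hvu
  have hreflect := (h.mem_of_le_of_isUpperSet hQ (left_mem_segment 𝕜 u v)
    (h.1 (right_mem_segment 𝕜 u v)) hvu).2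
  exact huv ((_root_.mem_extremePoints.1 (left_mem_extremePoints_segment u v)).2 _
    (right_mem_segment 𝕜 u v) _ hreflect (mem_openSegment_self_add_sub u v)).1.symm

lemma IsExtreme.eq_of_le_of_isUpperSet [PosSMulMono 𝕜 V] (hQ : IsUpperSet Q)
    (h : IsExtreme 𝕜 Q (segment 𝕜 u v)) (huv : u ≠ v) {p q : V} (hp : p ∈ segment 𝕜 u v)
    (hq : q ∈ segment 𝕜 u v) (hpq : p ≤ q) : p = q := by
  obtain ⟨c, hc⟩ := exists_sub_eq_smul_of_mem_segment hp hq
  have hqp : 0 ≤ q - p := sub_nonneg.2 hpq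
  rcases lt_trichotomy c 0 with hc0 | rfl | hc0
  · refine absurd (sub_nonneg.1 ?_) (h.not_le_of_isUpperSet hQ huv)
    have : u - v = (-c)⁻¹ • (q - p) := by
      rw [hc, smul_smul, inv_neg, neg_mul, inv_mul_cancel₀ hc0.ne, neg_smul, one_smul, neg_sub]
    exact this ▸ smul_nonneg (inv_nonneg.2 (neg_nonneg.2 hc0.le)) hqp
  · exact (sub_eq_zero.1 (by simpa using hc)).symm
  · refine absurd (sub_nonneg.1 ?_) ((segment_symm 𝕜 u v ▸ h).not_le_of_isUpperSet hQ huv.symm)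
    have : v - u = c⁻¹ • (q - p) := by rw [hc, smul_smul, inv_mul_cancel₀ hc0.ne', one_smul]
    exact this ▸ smul_nonneg (inv_nonneg.2 hc0.le) hqp

end UpperSet

section Dominant

variable {E : Type*}

lemma subset_dominant (Q : Set (E → ℝ)) : Q ⊆ dominant Q := fun y hy => ⟨y, hy, le_rfl⟩

lemma isUpperSet_dominant (Q : Set (E → ℝ)) : IsUpperSet (dominant Q) :=
  fun _ _ hxz ⟨y, hy, hyx⟩ => ⟨y, hy, hyx.trans hxz⟩

lemma IsEdgeOf.isExtreme_of_dominant {Q : Set (E → ℝ)} {u v : E → ℝ}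
    (h : IsEdgeOf (dominant Q) u v) : IsExtreme ℝ Q (segment ℝ u v) := by
  obtain ⟨huv, hext⟩ := h
  refine hext.mono (subset_dominant Q) fun x hx => ?_
  obtain ⟨y, hy, hyx⟩ := hext.1 hx
  have hyS := (hext.mem_of_le_of_isUpperSet (isUpperSet_dominant Q) hx
    (subset_dominant Q hy) hyx).1
  rwa [← hext.eq_of_le_of_isUpperSet (isUpperSet_dominant Q) huv hyS hx hyx]

lemma IsEdgeOf.exists_lt_of_dominant {Q : Set (E → ℝ)} {u v : E → ℝ}
    (h : IsEdgeOf (dominant Q) u v) : ∃ e, u e < v e := by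
  simpa [Pi.le_def] using h.2.not_le_of_isUpperSet (isUpperSet_dominant Q) h.1

lemma IsEdgeOf.symm {Q : Set (E → ℝ)} {u v : E → ℝ} (h : IsEdgeOf Q u v) : IsEdgeOf Q v u :=
  ⟨h.1.symm, segment_symm ℝ u v ▸ h.2⟩

end Dominant

lemma charVec_sub_charVec_apply {E : Type*} [DecidableEq E] (A B : Finset E) (e : E) :
    charVec B e - charVec A e = -1 ∨ charVec B e - charVec A e = 0 ∨
      charVec B e - charVec A e = 1 := by
  unfold charVec
  split_ifs <;> norm_num

theorem stmt8_general {E N : Type*} [DecidableEq E] [Fintype N]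
    (S : N → Finset (Finset E))
    (P : N → Set (E → ℝ))
    (hP : ∀ i, P i = convexHull ℝ {x | ∃ B ∈ S i, x = charVec B}) :
    ∀ u v : E → ℝ, IsEdgeOf (dominant (∑ i : N, P i)) u v →
      ∃ w : E → ℝ, (∀ e, w e = -1 ∨ w e = 0 ∨ w e = 1) ∧
        (∃ e f : E, e ≠ f ∧ w e ≠ 0 ∧ w f ≠ 0) ∧
        ∃ t : ℝ, t ≠ 0 ∧ v - u = t • w := by
  intro u v hedge
  obtain ⟨i, a, ha, b, hb, t, ht, hvu⟩ :=
    hedge.isExtreme_of_dominant.exists_extremePoints_sub_eq_smul hedge.1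
  rw [hP i] at ha hb
  obtain ⟨A, -, rfl⟩ := extremePoints_convexHull_subset ha
  obtain ⟨B, -, rfl⟩ := extremePoints_convexHull_subset hb
  obtain ⟨e, he⟩ := hedge.exists_lt_of_dominant
  obtain ⟨f, hf⟩ := hedge.symm.exists_lt_of_dominant
  have hw : ∀ g, u g ≠ v g → (charVec B - charVec A) g ≠ 0 := fun g hg h0 =>
    hg (sub_eq_zero.1 (by simpa [h0] using congrFun hvu g)).symm
  exact ⟨charVec B - charVec A, charVec_sub_charVec_apply A B,
    ⟨e, f, by rintro rfl; linarith, hw e he.ne, hw f hf.ne'⟩, t, ht, hvu⟩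

theorem stmt8 {E N : Type*} [Fintype E] [DecidableEq E] [Fintype N]
    (S : N → Finset (Finset E)) (hS : ∀ i, (S i).Nonempty)
    (P : N → Set (E → ℝ))
    (hP : ∀ i, P i = convexHull ℝ {x | ∃ B ∈ S i, x = charVec B}) :
    ∀ u v : E → ℝ, IsEdgeOf (dominant (∑ i : N, P i)) u v →
      ∃ w : E → ℝ, (∀ e, w e = -1 ∨ w e = 0 ∨ w e = 1) ∧
        (∃ e f : E, e ≠ f ∧ w e ≠ 0 ∧ w f ≠ 0) ∧
        ∃ t : ℝ, t ≠ 0 ∧ v - u = t • w :=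
  stmt8_general S P hP
end

section
/- Let $(E, \mathcal{F})$ be a nonempty clutter that is not the set of bases of a matroid. Then there exist $X, Y \in \mathcal{F}$ and three distinct elements $a, b, c \in X \triangle Y$ such that every $Z \in \mathcal{F}$ with $Z \subseteq X \cup Y$ satisfies $a \in Z$ or $\{b, c\} \subseteq Z$. -/
/-!
Call `(X, Y, e)` an exchange failure if `X, Y ∈ 𝓕`, `e ∈ X \ Y` and no `f ∈ Y \ X` gives
`X - e + f ∈ 𝓕`; since `𝓕` is not a matroid, one exists, and we take one with `X ∪ Y`
inclusion-minimal. If `Z ∈ 𝓕`, `Z ⊆ X ∪ Y` and `e ∉ Z`, then `(X, Z, e)` is again a failure,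
so minimality gives `X ∪ Z = X ∪ Y`, i.e. `Y \ X ⊆ Z`. This settles the case `|Y \ X| ≥ 2`
with `a = e`. If `Y \ X = {f}`, then `X \ Y` has a second element `g ≠ e` (otherwise
`X - e + f = Y`), and the clutter property makes `(Y, X, f)` a failure with the same union, to
which the first case applies with `a = f`, `{b, c} = {e, g}`.
-/

open Set

section

variable {E : Type*} {𝓕 : Set (Set E)} {X Y Z : Set E} {e : E}

structure IsExchangeFailure (𝓕 : Set (Set E)) (X Y : Set E) (e : E) : Prop where
  left_mem : X ∈ 𝓕
  right_mem : Y ∈ 𝓕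
  mem_diff : e ∈ X \ Y
  insert_notMem : ∀ f ∈ Y \ X, insert f (X \ {e}) ∉ 𝓕

def IsExchangeFailureUnion (𝓕 : Set (Set E)) (S : Set E) : Prop :=
  ∃ X Y e, IsExchangeFailure 𝓕 X Y e ∧ X ∪ Y = S

lemma exists_isExchangeFailure [Finite E] (hne : 𝓕.Nonempty)
    (hnonmatroid : ¬ ∃ M : Matroid E, {B : Set E | M.IsBase B} = 𝓕) :
    ∃ X Y e, IsExchangeFailure 𝓕 X Y e := by
  by_contra! hexchange
  obtain ⟨B, hB⟩ := hne
  refine hnonmatroid ⟨Matroid.ofExistsFiniteIsBase univ (· ∈ 𝓕) ⟨B, hB, toFinite B⟩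
    (fun X Y hX hY e he => ?_) (fun B _ => subset_univ B), rfl⟩
  by_contra! hfail
  exact hexchange X Y e ⟨hX, hY, he, hfail⟩

lemma exists_isExchangeFailure_minimal [Finite E]
    (h : ∃ X Y e, IsExchangeFailure 𝓕 X Y e) :
    ∃ X Y e, IsExchangeFailure 𝓕 X Y e ∧ Minimal (IsExchangeFailureUnion 𝓕) (X ∪ Y) := by
  obtain ⟨X, Y, e, h⟩ := h
  obtain ⟨_, ⟨X', Y', e', h', rfl⟩, hmin⟩ :=
    exists_minimal_of_wellFoundedLT (IsExchangeFailureUnion 𝓕) ⟨X ∪ Y, X, Y, e, h, rfl⟩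
  exact ⟨X', Y', e', h', ⟨X', Y', e', h', rfl⟩, hmin⟩

namespace IsExchangeFailure

lemma diff_subset_of_minimal (h : IsExchangeFailure 𝓕 X Y e)
    (hmin : Minimal (IsExchangeFailureUnion 𝓕) (X ∪ Y)) (hZ : Z ∈ 𝓕) (hZXY : Z ⊆ X ∪ Y)
    (heZ : e ∉ Z) : Y \ X ⊆ Z := by
  have hXZ : IsExchangeFailure 𝓕 X Z e :=
    ⟨h.left_mem, hZ, ⟨h.mem_diff.1, heZ⟩,
      fun f hf => h.insert_notMem f ⟨(hZXY hf.1).resolve_left hf.2, hf.2⟩⟩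
  have hunion : X ∪ Y ⊆ X ∪ Z :=
    hmin.2 ⟨X, Z, e, hXZ, rfl⟩ (union_subset subset_union_left hZXY)
  exact fun y hy => (hunion (Or.inr hy.1)).resolve_left hy.2

lemma exists_of_minimal_of_ne (h : IsExchangeFailure 𝓕 X Y e)
    (hmin : Minimal (IsExchangeFailureUnion 𝓕) (X ∪ Y)) {b c : E} (hb : b ∈ Y \ X)
    (hc : c ∈ Y \ X) (hbc : b ≠ c) :
    ∃ X ∈ 𝓕, ∃ Y ∈ 𝓕, ∃ a b c : E,
      a ∈ (X \ Y) ∪ (Y \ X) ∧ b ∈ (X \ Y) ∪ (Y \ X) ∧ c ∈ (X \ Y) ∪ (Y \ X) ∧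
      a ≠ b ∧ a ≠ c ∧ b ≠ c ∧
      ∀ Z ∈ 𝓕, Z ⊆ X ∪ Y → a ∈ Z ∨ ({b, c} : Set E) ⊆ Z := by
  refine ⟨X, h.left_mem, Y, h.right_mem, e, b, c, Or.inl h.mem_diff, Or.inr hb, Or.inr hc,
    fun heb => hb.2 (heb ▸ h.mem_diff.1), fun hec => hc.2 (hec ▸ h.mem_diff.1), hbc,
    fun Z hZ hZXY => ?_⟩
  by_cases heZ : e ∈ Z
  · exact Or.inl heZ
  · have hsub := h.diff_subset_of_minimal hmin hZ hZXY heZ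
    exact Or.inr (insert_subset (hsub hb) (singleton_subset_iff.2 (hsub hc)))

lemma diff_nonempty (hclutter : ∀ X ∈ 𝓕, ∀ Y ∈ 𝓕, X ⊆ Y → X = Y)
    (h : IsExchangeFailure 𝓕 X Y e) : (Y \ X).Nonempty := by
  rw [Set.sdiff_nonempty]
  intro hYX
  exact h.mem_diff.2 (hclutter Y h.right_mem X h.left_mem hYX ▸ h.mem_diff.1)

lemma exists_ne_of_diff_eq_singleton {f : E} (h : IsExchangeFailure 𝓕 X Y e)
    (hYX : Y \ X = {f}) : ∃ g ∈ X \ Y, g ≠ e := by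
  by_contra! honly
  have hXY : X \ Y = {e} := eq_singleton_iff_unique_mem.2 ⟨h.mem_diff, honly⟩
  have hY : insert f (X \ {e}) = Y := by
    rw [← hXY, sdiff_sdiff_right_self, insert_eq, ← hYX, union_comm, inter_comm,
      inter_union_sdiff]
  exact h.insert_notMem f (hYX ▸ mem_singleton f) (hY ▸ h.right_mem)

lemma swap (hclutter : ∀ X ∈ 𝓕, ∀ Y ∈ 𝓕, X ⊆ Y → X = Y) (h : IsExchangeFailure 𝓕 X Y e)
    {f g : E} (hYX : Y \ X = {f}) (hg : g ∈ X \ Y) (hge : g ≠ e) :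
    IsExchangeFailure 𝓕 Y X f := by
  refine ⟨h.right_mem, h.left_mem, hYX ▸ mem_singleton f, fun g' hg' hmem => hge ?_⟩
  have hsub : insert g' (Y \ {f}) ⊆ X :=
    insert_subset hg'.1 (by rw [← hYX, sdiff_sdiff_right_self]; exact inter_subset_right)
  have hX := hclutter _ hmem X h.left_mem hsub
  have hunique : ∀ x ∈ X \ Y, x = g' := fun x hx =>
    (hX ▸ hx.1 : x ∈ insert g' (Y \ {f})).resolve_right fun hxY => hx.2 hxY.1
  rw [hunique g hg, hunique e h.mem_diff]

end IsExchangeFailure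

end

theorem stmt11 {E : Type*} [Fintype E] (𝓕 : Set (Set E)) (hne : 𝓕.Nonempty)
    (hclutter : ∀ X ∈ 𝓕, ∀ Y ∈ 𝓕, X ⊆ Y → X = Y)
    (hnonmatroid : ¬ ∃ M : Matroid E, {B : Set E | M.IsBase B} = 𝓕) :
    ∃ X ∈ 𝓕, ∃ Y ∈ 𝓕, ∃ a b c : E,
      a ∈ (X \ Y) ∪ (Y \ X) ∧ b ∈ (X \ Y) ∪ (Y \ X) ∧ c ∈ (X \ Y) ∪ (Y \ X) ∧
      a ≠ b ∧ a ≠ c ∧ b ≠ c ∧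
      ∀ Z ∈ 𝓕, Z ⊆ X ∪ Y → a ∈ Z ∨ ({b, c} : Set E) ⊆ Z := by
  obtain ⟨X, Y, e, h, hmin⟩ :=
    exists_isExchangeFailure_minimal (exists_isExchangeFailure hne hnonmatroid)
  rcases (h.diff_nonempty hclutter).exists_eq_singleton_or_nontrivial with
    ⟨f, hYX⟩ | ⟨b, hb, c, hc, hbc⟩
  · obtain ⟨g, hg, hge⟩ := h.exists_ne_of_diff_eq_singleton hYX
    exact (h.swap hclutter hYX hg hge).exists_of_minimal_of_ne (union_comm X Y ▸ hmin) hg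
      h.mem_diff hge
  · exact h.exists_of_minimal_of_ne hmin hb hc hbc
end

section
/- Let $\rho_i : 2^E \to \mathbb{R}$, $i \in N$, be submodular, monotone, normalized functions on a common finite ground set $E$, and $\rho = \sum_{i \in N} \rho_i$. Then the Minkowski sum of the polymatroid base polytopes satisfies $\sum_{i \in N} P_{\rho_i} = P_\rho$. -/
open Finset Pointwise

/-!
A point of `P_ρ` outside the convex hull of the greedy vertices
`x^π (π k) = ρ {π 0, …, π k} - ρ {π 0, …, π (k-1)}` would be separated from it by a linear
functional `w`; but for an ordering `π` listing `E` by decreasing `w`, Abel summation against the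
prefix constraints shows that `x^π` maximizes `w` on `P_ρ`. Since `x^π` is additive in `ρ`,
`P_{∑ ρ_i} = conv {x^π(∑ ρ_i)} ⊆ ∑ conv {x^π(ρ_i)} = ∑ P_{ρ_i}`; the other inclusion is the sum of
the defining inequalities.
-/

lemma sum_range_mul_sub_nonpos {n : ℕ} {c D : ℕ → ℝ} (hc : ∀ k, k + 1 < n → c (k + 1) ≤ c k)
    (hD : ∀ k, D k ≤ 0) (hD0 : D 0 = 0) (hDn : D n = 0) :
    ∑ k ∈ range n, c k * (D (k + 1) - D k) ≤ 0 := by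
  have hG (k : ℕ) : ∑ i ∈ range k, (D (i + 1) - D i) = D k := by
    rw [sum_range_sub, hD0, sub_zero]
  have hparts := sum_range_by_parts c (fun k => D (k + 1) - D k) n
  simp only [smul_eq_mul, hG, hDn, mul_zero, zero_sub] at hparts
  rw [hparts, neg_nonpos]
  refine sum_nonneg fun k hk => mul_nonneg_of_nonpos_of_nonpos (sub_nonpos.2 (hc k ?_)) (hD _)
  have := mem_range.1 hk
  omega

lemma exists_antitone_comp_equiv {E α : Type*} [Fintype E] [LinearOrder α] (w : E → α) :
    ∃ π : Fin (Fintype.card E) ≃ E, Antitone (w ∘ π) := by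
  let ε := (Fintype.equivFin E).symm
  let f : Fin (Fintype.card E) → αᵒᵈ := fun k => OrderDual.toDual (w (ε k))
  exact ⟨(Tuple.sort f).trans ε, Tuple.monotone_sort f⟩

namespace Polymatroid

variable {E : Type*}

def IsSubmodular [DecidableEq E] (ρ : Finset E → ℝ) : Prop :=
  ∀ U V : Finset E, ρ (U ∪ V) + ρ (U ∩ V) ≤ ρ U + ρ V

lemma IsSubmodular.insert_sub_le [DecidableEq E] {ρ : Finset E → ℝ} (h : IsSubmodular ρ)
    {A B : Finset E} {a : E} (hAB : A ⊆ B) (ha : a ∉ B) :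
    ρ (insert a B) - ρ B ≤ ρ (insert a A) - ρ A := by
  have := h (insert a A) B
  rw [insert_union, union_eq_right.2 hAB, insert_inter_of_notMem ha,
    inter_eq_left.2 hAB] at this
  linarith

variable [Fintype E]

def prefixSet (π : Fin (Fintype.card E) ≃ E) (k : ℕ) : Finset E :=
  {e | (π.symm e : ℕ) < k}

section prefixSet

variable {π : Fin (Fintype.card E) ≃ E}

@[simp]
lemma mem_prefixSet {k : ℕ} {e : E} : e ∈ prefixSet π k ↔ (π.symm e : ℕ) < k := by
  simp [prefixSet]

@[simp]
lemma prefixSet_zero : prefixSet π 0 = ∅ := by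
  ext; simp

lemma prefixSet_card : prefixSet π (Fintype.card E) = univ := by
  ext e; simp

lemma prefixSet_mono : Monotone (prefixSet π) := fun _ _ hkl e he => by
  simp only [mem_prefixSet] at he ⊢
  omega

lemma apply_notMem_prefixSet (k : Fin (Fintype.card E)) : π k ∉ prefixSet π k := by
  simp

lemma prefixSet_succ [DecidableEq E] (k : Fin (Fintype.card E)) :
    prefixSet π (k + 1) = insert (π k) (prefixSet π k) := by
  ext e
  rw [mem_insert, mem_prefixSet, mem_prefixSet, Nat.lt_succ_iff_lt_or_eq, ← Fin.ext_iff,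
    π.symm_apply_eq, or_comm]

end prefixSet

def greedyVertex (ρ : Finset E → ℝ) (π : Fin (Fintype.card E) ≃ E) : E → ℝ :=
  fun e => ρ (prefixSet π (π.symm e + 1)) - ρ (prefixSet π (π.symm e))

section greedyVertex

variable {ρ : Finset E → ℝ} {π : Fin (Fintype.card E) ≃ E}

@[simp]
lemma greedyVertex_apply_apply (k : Fin (Fintype.card E)) :
    greedyVertex ρ π (π k) = ρ (prefixSet π (k + 1)) - ρ (prefixSet π k) := by
  simp [greedyVertex]

lemma greedyVertex_nonneg (hmono : Monotone ρ) (e : E) : 0 ≤ greedyVertex ρ π e :=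
  sub_nonneg.2 (hmono (prefixSet_mono (Nat.le_succ _)))

lemma sum_prefixSet_greedyVertex [DecidableEq E] (hnorm : ρ ∅ = 0) {k : ℕ}
    (hk : k ≤ Fintype.card E) : ∑ e ∈ prefixSet π k, greedyVertex ρ π e = ρ (prefixSet π k) := by
  induction k with
  | zero => simp [hnorm]
  | succ k ih =>
    have hk' : k < Fintype.card E := hk
    rw [prefixSet_succ (π := π) ⟨k, hk'⟩, sum_insert (apply_notMem_prefixSet _),
      ih hk'.le, greedyVertex_apply_apply, prefixSet_succ]
    ring

lemma sum_greedyVertex_le_of_subset [DecidableEq E] (hsub : IsSubmodular ρ) (hnorm : ρ ∅ = 0)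
    {k : ℕ} (hk : k ≤ Fintype.card E) {U : Finset E} (hU : U ⊆ prefixSet π k) :
    ∑ e ∈ U, greedyVertex ρ π e ≤ ρ U := by
  induction k generalizing U with
  | zero => simp_all
  | succ k ih =>
    set a := π ⟨k, hk⟩
    rw [prefixSet_succ (π := π) ⟨k, hk⟩] at hU
    by_cases ha : a ∈ U
    · have hA : U.erase a ⊆ prefixSet π k := by
        simpa [subset_insert_iff] using hU
      have hmarginal := hsub.insert_sub_le hA (apply_notMem_prefixSet (π := π) ⟨k, hk⟩)
      rw [insert_erase ha, ← prefixSet_succ] at hmarginal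
      rw [← add_sum_erase U _ ha, greedyVertex_apply_apply]
      linarith [ih (Nat.le_of_succ_le hk) hA]
    · exact ih (Nat.le_of_succ_le hk) ((subset_insert_iff_of_notMem ha).1 hU)

lemma greedyVertex_mem_basePolytope [DecidableEq E] (hsub : IsSubmodular ρ) (hmono : Monotone ρ)
    (hnorm : ρ ∅ = 0) (π : Fin (Fintype.card E) ≃ E) : greedyVertex ρ π ∈ basePolytope ρ := by
  refine ⟨greedyVertex_nonneg hmono, fun U => ?_, ?_⟩
  · exact sum_greedyVertex_le_of_subset hsub hnorm le_rfl ((subset_univ U).trans prefixSet_card.symm.subset)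
  · rw [← prefixSet_card (π := π)]
    exact sum_prefixSet_greedyVertex hnorm le_rfl

lemma sum_mul_le_sum_greedyVertex_mul (hnorm : ρ ∅ = 0) {w : E → ℝ} (hw : Antitone (w ∘ π))
    {x : E → ℝ} (hx : x ∈ basePolytope ρ) :
    ∑ e, x e * w e ≤ ∑ e, greedyVertex ρ π e * w e := by
  classical
  let c : ℕ → ℝ := fun k => if h : k < Fintype.card E then w (π ⟨k, h⟩) else 0
  let D : ℕ → ℝ := fun k => ∑ e ∈ prefixSet π k, x e - ρ (prefixSet π k)
  have hAbel : ∑ e, (x e - greedyVertex ρ π e) * w e =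
      ∑ k ∈ range (Fintype.card E), c k * (D (k + 1) - D k) := by
    rw [← π.sum_comp fun e => (x e - greedyVertex ρ π e) * w e, ← Fin.sum_univ_eq_sum_range]
    refine sum_congr rfl fun k _ => ?_
    simp only [c, D, dif_pos k.isLt, prefixSet_succ k, sum_insert (apply_notMem_prefixSet k),
      greedyVertex_apply_apply]
    ring
  have hc (k : ℕ) (hk : k + 1 < Fintype.card E) : c (k + 1) ≤ c k := by
    simp only [c, dif_pos hk, dif_pos (Nat.lt_of_succ_lt hk)]
    exact hw (Fin.mk_le_mk.2 k.le_succ)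
  have := sum_range_mul_sub_nonpos (D := D) hc (fun k => sub_nonpos.2 (hx.2.1 _))
    (by simp [D, hnorm]) (by simp [D, prefixSet_card, hx.2.2])
  rw [← hAbel] at this
  simp only [sub_mul, sum_sub_distrib] at this
  linarith

end greedyVertex

lemma convex_basePolytope (ρ : Finset E → ℝ) : Convex ℝ (basePolytope ρ) := by
  have hlin (U : Finset E) : IsLinearMap ℝ fun x : E → ℝ => ∑ e ∈ U, x e :=
    ⟨fun x y => sum_add_distrib, fun c x => (mul_sum ..).symm⟩
  simp only [basePolytope, Set.ofPred_and, Set.ofPred_forall]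
  exact (convex_iInter fun e => convex_halfSpace_ge (LinearMap.proj e).isLinear 0).inter
    ((convex_iInter fun U => convex_halfSpace_le (hlin U) _).inter
      (convex_hyperplane (hlin univ) _))

lemma basePolytope_subset_convexHull {ρ : Finset E → ℝ} (hnorm : ρ ∅ = 0) :
    basePolytope ρ ⊆ convexHull ℝ (Set.range (greedyVertex ρ)) := by
  classical
  intro x hx
  by_contra hxC
  obtain ⟨f, u, hfC, hfx⟩ := geometric_hahn_banach_closed_point (convex_convexHull ℝ _)
    ((Set.finite_range _).isClosed_convexHull (𝕜 := ℝ)) hxC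
  set w : E → ℝ := fun e => f fun j => if e = j then 1 else 0
  have hf (y : E → ℝ) : f y = ∑ e, y e * w e :=
    (f : (E → ℝ) →ₗ[ℝ] ℝ).pi_apply_eq_sum_univ y
  obtain ⟨π, hπ⟩ := exists_antitone_comp_equiv w
  have hgv := hfC _ (subset_convexHull ℝ _ ⟨π, rfl⟩)
  rw [hf] at hgv hfx
  linarith [sum_mul_le_sum_greedyVertex_mul hnorm hπ hx]

lemma convexHull_range_greedyVertex [DecidableEq E] {ρ : Finset E → ℝ} (hsub : IsSubmodular ρ)
    (hmono : Monotone ρ) (hnorm : ρ ∅ = 0) :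
    convexHull ℝ (Set.range (greedyVertex ρ)) = basePolytope ρ :=
  (convexHull_min (Set.range_subset_iff.2 (greedyVertex_mem_basePolytope hsub hmono hnorm))
    (convex_basePolytope ρ)).antisymm (basePolytope_subset_convexHull hnorm)

variable {N : Type*} (s : Finset N) (ρ : N → Finset E → ℝ)

lemma greedyVertex_sum (π : Fin (Fintype.card E) ≃ E) :
    greedyVertex (fun U => ∑ i ∈ s, ρ i U) π = ∑ i ∈ s, greedyVertex (ρ i) π := by
  ext e
  simp [greedyVertex, sum_sub_distrib]

lemma range_greedyVertex_sum_subset :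
    Set.range (greedyVertex fun U => ∑ i ∈ s, ρ i U) ⊆ ∑ i ∈ s, Set.range (greedyVertex (ρ i)) := by
  rintro _ ⟨π, rfl⟩
  rw [greedyVertex_sum]
  exact Set.finsetSum_mem_finsetSum _ _ _ fun i _ => ⟨π, rfl⟩

lemma sum_basePolytope_subset :
    ∑ i ∈ s, basePolytope (ρ i) ⊆ basePolytope fun U => ∑ i ∈ s, ρ i U := by
  intro x hx
  obtain ⟨g, hg, rfl⟩ := (Set.mem_finsetSum _ _ _).1 hx
  have hswap (U : Finset E) : ∑ e ∈ U, (∑ i ∈ s, g i) e = ∑ i ∈ s, ∑ e ∈ U, g i e := by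
    simp only [Finset.sum_apply]
    exact sum_comm
  refine ⟨fun e => ?_, fun U => ?_, ?_⟩
  · rw [Finset.sum_apply]
    exact sum_nonneg fun i hi => (hg hi).1 e
  · rw [hswap]
    exact sum_le_sum fun i hi => (hg hi).2.1 U
  · rw [hswap]
    exact sum_congr rfl fun i hi => (hg hi).2.2

end Polymatroid

open Polymatroid in
theorem stmt14 {E N : Type*} [Fintype E] [DecidableEq E] [Fintype N]
    (ρ : N → Finset E → ℝ)
    (hsub : ∀ i, ∀ U V : Finset E, ρ i (U ∪ V) + ρ i (U ∩ V) ≤ ρ i U + ρ i V)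
    (hmono : ∀ i, ∀ U V : Finset E, U ⊆ V → ρ i U ≤ ρ i V)
    (hnorm : ∀ i, ρ i ∅ = 0) :
    ∑ i : N, basePolytope (ρ i) = basePolytope (fun U => ∑ i : N, ρ i U) := by
  refine (sum_basePolytope_subset univ ρ).antisymm ?_
  calc basePolytope (fun U => ∑ i, ρ i U)
      ⊆ convexHull ℝ (Set.range (greedyVertex fun U => ∑ i, ρ i U)) :=
        basePolytope_subset_convexHull (sum_eq_zero fun i _ => hnorm i)
    _ ⊆ convexHull ℝ (∑ i, Set.range (greedyVertex (ρ i))) :=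
        convexHull_mono (range_greedyVertex_sum_subset univ ρ)
    _ = ∑ i, convexHull ℝ (Set.range (greedyVertex (ρ i))) := convexHull_sum ..
    _ = ∑ i, basePolytope (ρ i) :=
        sum_congr rfl fun i _ => convexHull_range_greedyVertex (hsub i) (fun _ _ => hmono i _ _) (hnorm i)
end

section
/- Suppose the cost functions $c_e$ are continuous and nondecreasing, and $x, y$ are two minimizers of the Beckmann potential $\Phi$ over a convex set $P \subseteq \mathbb{R}_{\geq 0}^E$. Then $c_e(x_e) = c_e(y_e)$ for every $e \in E$, i.e., the vector of equilibrium costs is unique. -/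
open Finset MeasureTheory

section aux

variable {f : ℝ → ℝ}

lemma aux_ii (hf : ContinuousOn f (Set.Ici 0)) {p q : ℝ} (hp : 0 ≤ p) (hq : 0 ≤ q) :
    IntervalIntegrable f MeasureTheory.volume p q := by
  apply (hf.mono ?_).intervalIntegrable
  exact fun t ht => Set.mem_Ici.mpr (le_trans (le_inf hp hq) ht.1)

/-- ∫_p^m f ≤ f m * (m - p) for p ≤ m, monotone f, and f m * (q - m) ≤ ∫_m^q f. -/
lemma aux_upper (hf : ContinuousOn f (Set.Ici 0)) (hm : MonotoneOn f (Set.Ici 0))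
    {p m : ℝ} (hp : 0 ≤ p) (hpm : p ≤ m) :
    (∫ t in p..m, f t) ≤ f m * (m - p) := by
  have hm0 : (0:ℝ) ≤ m := hp.trans hpm
  have h := intervalIntegral.integral_mono_on (f := f) (g := fun _ => f m) hpm
    (aux_ii hf hp hm0) intervalIntegrable_const
    (fun t ht => hm (Set.mem_Ici.mpr (hp.trans ht.1)) (Set.mem_Ici.mpr hm0) ht.2)
  simpa [mul_comm] using h

lemma aux_lower (hf : ContinuousOn f (Set.Ici 0)) (hm : MonotoneOn f (Set.Ici 0))
    {m q : ℝ} (hm0 : 0 ≤ m) (hmq : m ≤ q) :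
    f m * (q - m) ≤ ∫ t in m..q, f t := by
  have hq0 : (0:ℝ) ≤ q := hm0.trans hmq
  have h := intervalIntegral.integral_mono_on (f := fun _ => f m) (g := f) hmq
    intervalIntegrable_const (aux_ii hf hm0 hq0)
    (fun t ht => hm (Set.mem_Ici.mpr hm0) (Set.mem_Ici.mpr (hm0.trans ht.1)) ht.1)
  simpa [mul_comm] using h

lemma aux_mid_le' (hf : ContinuousOn f (Set.Ici 0)) (hm : MonotoneOn f (Set.Ici 0))
    {p q : ℝ} (hp : 0 ≤ p) (hpq : p ≤ q) :
    (∫ t in (0:ℝ)..((p+q)/2), f t) ≤ ((∫ t in (0:ℝ)..p, f t) + ∫ t in (0:ℝ)..q, f t)/2 := by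
  set m := (p+q)/2 with hmdef
  have hpm : p ≤ m := by simp [hmdef]; linarith
  have hmq : m ≤ q := by simp [hmdef]; linarith
  have hm0 : 0 ≤ m := hp.trans hpm
  have hq0 : 0 ≤ q := hm0.trans hmq
  have h1 : (∫ t in (0:ℝ)..m, f t) = (∫ t in (0:ℝ)..p, f t) + ∫ t in p..m, f t :=
    (intervalIntegral.integral_add_adjacent_intervals (aux_ii hf le_rfl hp)
      (aux_ii hf hp hm0)).symm
  have h2 : (∫ t in (0:ℝ)..q, f t) = (∫ t in (0:ℝ)..m, f t) + ∫ t in m..q, f t :=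
    (intervalIntegral.integral_add_adjacent_intervals (aux_ii hf le_rfl hm0)
      (aux_ii hf hm0 hq0)).symm
  have hu := aux_upper hf hm hp hpm
  have hl := aux_lower hf hm hm0 hmq
  have heq : m - p = q - m := by simp [hmdef]; ring
  rw [heq] at hu
  linarith

lemma aux_mid_le (hf : ContinuousOn f (Set.Ici 0)) (hm : MonotoneOn f (Set.Ici 0))
    {p q : ℝ} (hp : 0 ≤ p) (hq : 0 ≤ q) :
    (∫ t in (0:ℝ)..((p+q)/2), f t) ≤ ((∫ t in (0:ℝ)..p, f t) + ∫ t in (0:ℝ)..q, f t)/2 := by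
  rcases le_total p q with h | h
  · exact aux_mid_le' hf hm hp h
  · have := aux_mid_le' hf hm hq h
    rw [add_comm q p] at this
    linarith

/-- If the integral of a continuous monotone f over [m,q] equals f m * (q-m), then f q = f m. -/
lemma aux_const_right (hf : ContinuousOn f (Set.Ici 0)) (hm : MonotoneOn f (Set.Ici 0))
    {m q : ℝ} (hm0 : 0 ≤ m) (hmq : m ≤ q)
    (heq : (∫ t in m..q, f t) = f m * (q - m)) : f q = f m := by
  rcases eq_or_lt_of_le hmq with rfl | hlt
  · rfl
  have hq0 : 0 ≤ q := hm0.trans hmq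
  by_contra hne
  have hfmq : f m < f q :=
    lt_of_le_of_ne (hm (Set.mem_Ici.mpr hm0) (Set.mem_Ici.mpr hq0) hmq) (Ne.symm hne)
  have hsub : Set.Icc m q ⊆ Set.Ici 0 := fun t ht => Set.mem_Ici.mpr (hm0.trans ht.1)
  have hstrict := intervalIntegral.integral_lt_integral_of_continuousOn_of_le_of_exists_lt
    (f := fun _ => f m) (g := f) hlt continuousOn_const (hf.mono hsub)
    (fun t ht => hm (Set.mem_Ici.mpr hm0) (Set.mem_Ici.mpr (hm0.trans ht.1.le)) ht.1.le)
    ⟨q, Set.right_mem_Icc.mpr hmq, hfmq⟩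
  rw [intervalIntegral.integral_const, smul_eq_mul, mul_comm] at hstrict
  rw [heq] at hstrict
  exact lt_irrefl _ hstrict

lemma aux_const_left (hf : ContinuousOn f (Set.Ici 0)) (hm : MonotoneOn f (Set.Ici 0))
    {p m : ℝ} (hp : 0 ≤ p) (hpm : p ≤ m)
    (heq : (∫ t in p..m, f t) = f m * (m - p)) : f p = f m := by
  rcases eq_or_lt_of_le hpm with rfl | hlt
  · rfl
  have hm0 : 0 ≤ m := hp.trans hpm
  by_contra hne
  have hfpm : f p < f m :=
    lt_of_le_of_ne (hm (Set.mem_Ici.mpr hp) (Set.mem_Ici.mpr hm0) hpm) hne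
  have hsub : Set.Icc p m ⊆ Set.Ici 0 := fun t ht => Set.mem_Ici.mpr (hp.trans ht.1)
  have hstrict := intervalIntegral.integral_lt_integral_of_continuousOn_of_le_of_exists_lt
    (f := f) (g := fun _ => f m) hlt (hf.mono hsub) continuousOn_const
    (fun t ht => hm (Set.mem_Ici.mpr (hp.trans ht.1.le)) (Set.mem_Ici.mpr hm0) ht.2)
    ⟨p, Set.left_mem_Icc.mpr hpm, hfpm⟩
  rw [intervalIntegral.integral_const, smul_eq_mul, mul_comm] at hstrict
  rw [heq] at hstrict
  exact lt_irrefl _ hstrict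

/-- Midpoint equality forces endpoint costs to agree. -/
lemma aux_eq_of_mid (hf : ContinuousOn f (Set.Ici 0)) (hm : MonotoneOn f (Set.Ici 0))
    {p q : ℝ} (hp : 0 ≤ p) (hpq : p ≤ q)
    (heq : (∫ t in (0:ℝ)..((p+q)/2), f t) = ((∫ t in (0:ℝ)..p, f t) + ∫ t in (0:ℝ)..q, f t)/2) :
    f p = f q := by
  set m := (p+q)/2 with hmdef
  have hpm : p ≤ m := by simp [hmdef]; linarith
  have hmq : m ≤ q := by simp [hmdef]; linarith
  have hm0 : 0 ≤ m := hp.trans hpm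
  have hq0 : 0 ≤ q := hm0.trans hmq
  have h1 : (∫ t in (0:ℝ)..m, f t) = (∫ t in (0:ℝ)..p, f t) + ∫ t in p..m, f t :=
    (intervalIntegral.integral_add_adjacent_intervals (aux_ii hf le_rfl hp)
      (aux_ii hf hp hm0)).symm
  have h2 : (∫ t in (0:ℝ)..q, f t) = (∫ t in (0:ℝ)..m, f t) + ∫ t in m..q, f t :=
    (intervalIntegral.integral_add_adjacent_intervals (aux_ii hf le_rfl hm0)
      (aux_ii hf hm0 hq0)).symm
  have hu := aux_upper hf hm hp hpm
  have hl := aux_lower hf hm hm0 hmq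
  have hlen : m - p = q - m := by simp [hmdef]; ring
  -- from heq: ∫_p^m = ∫_m^q
  have key : (∫ t in p..m, f t) = ∫ t in m..q, f t := by linarith
  have hupper : (∫ t in p..m, f t) = f m * (m - p) := by
    rw [hlen] at hu ⊢; linarith
  have hlower : (∫ t in m..q, f t) = f m * (q - m) := by
    rw [hlen] at hu; linarith
  rw [aux_const_left hf hm hp hpm hupper, aux_const_right hf hm hm0 hmq hlower]

end aux

theorem stmt16 {E : Type*} [Fintype E] (c : E → ℝ → ℝ)
    (hc_cont : ∀ e, ContinuousOn (c e) (Set.Ici 0))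
    (hc_mono : ∀ e, MonotoneOn (c e) (Set.Ici 0))
    (hc_nonneg : ∀ e, ∀ t ∈ Set.Ici (0:ℝ), 0 ≤ c e t)
    (P : Set (E → ℝ)) (hPconv : Convex ℝ P) (hPnn : P ⊆ {x | ∀ e, 0 ≤ x e})
    (x y : E → ℝ)
    (hx : x ∈ P) (hxmin : ∀ z ∈ P, beckmann c x ≤ beckmann c z)
    (hy : y ∈ P) (hymin : ∀ z ∈ P, beckmann c y ≤ beckmann c z) :
    ∀ e, c e (x e) = c e (y e) := by
  have hxnn := hPnn hx
  have hynn := hPnn hy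
  set z : E → ℝ := fun e => (x e + y e)/2 with hzdef
  have hz : z ∈ P := by
    have := hPconv hx hy (by norm_num : (0:ℝ) ≤ 1/2) (by norm_num : (0:ℝ) ≤ 1/2) (by norm_num)
    convert this using 1
    funext e
    simp [hzdef]
    ring
  have hxy : beckmann c x = beckmann c y := le_antisymm (hxmin y hy) (hymin x hx)
  -- per-edge convexity
  have hterm : ∀ e, (∫ t in (0:ℝ)..(z e), c e t) ≤
      ((∫ t in (0:ℝ)..(x e), c e t) + ∫ t in (0:ℝ)..(y e), c e t)/2 := fun e =>
    aux_mid_le (hc_cont e) (hc_mono e) (hxnn e) (hynn e)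
  have hsum : beckmann c z ≤ (beckmann c x + beckmann c y)/2 := by
    unfold beckmann
    have h := Finset.sum_le_sum fun e (_ : e ∈ Finset.univ) => hterm e
    rw [← Finset.sum_div] at h
    rwa [Finset.sum_add_distrib] at h
  have hzx : beckmann c x ≤ beckmann c z := hxmin z hz
  have hzeq : beckmann c z = (beckmann c x + beckmann c y)/2 := by
    rw [← hxy] at hsum ⊢; linarith
  -- each term is equal
  have hall : ∀ e, (∫ t in (0:ℝ)..(z e), c e t) =
      ((∫ t in (0:ℝ)..(x e), c e t) + ∫ t in (0:ℝ)..(y e), c e t)/2 := by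
    have hsum0 : ∑ e, (((∫ t in (0:ℝ)..(x e), c e t) + ∫ t in (0:ℝ)..(y e), c e t)/2
        - ∫ t in (0:ℝ)..(z e), c e t) = 0 := by
      rw [Finset.sum_sub_distrib]
      have : ∑ e, ((∫ t in (0:ℝ)..(x e), c e t) + ∫ t in (0:ℝ)..(y e), c e t)/2
          = (beckmann c x + beckmann c y)/2 := by
        unfold beckmann
        rw [← Finset.sum_div, Finset.sum_add_distrib]
      rw [this, ← hzeq]
      unfold beckmann
      ring
    intro e
    have := (Finset.sum_eq_zero_iff_of_nonneg
      (fun e _ => sub_nonneg.mpr (hterm e))).mp hsum0 e (Finset.mem_univ e)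
    linarith [sub_eq_zero.mp this]
  intro e
  rcases le_total (x e) (y e) with h | h
  · exact aux_eq_of_mid (hc_cont e) (hc_mono e) (hxnn e) h (by
      have := hall e; simpa [hzdef] using this)
  · refine (aux_eq_of_mid (hc_cont e) (hc_mono e) (hynn e) h ?_).symm
    have := hall e
    rw [show z e = (y e + x e)/2 by simp [hzdef]; ring] at this
    linarith
end

section
/- Let $x$ and $\bar{x}$ be two points of a polymatroid base polytope $P_\rho$ and let $e \in E$ satisfy $\bar{x}_e > x_e$. Then there exist $f \in E \setminus \{e\}$ with $\bar{x}_f < x_f$ and $\epsilon > 0$ such that both $x + \epsilon(\chi_e - \chi_f) \in P_\rho$ and $\bar{x} + \epsilon(\chi_f - \chi_e) \in P_\rho$. -/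
open Finset

section Aux

variable {E : Type*} [Fintype E] [DecidableEq E] (ρ : Finset E → ℝ)

lemma tight_union_inter
    (hsub : ∀ U V : Finset E, ρ (U ∪ V) + ρ (U ∩ V) ≤ ρ U + ρ V)
    (x : E → ℝ) (hx : ∀ U : Finset E, ∑ a ∈ U, x a ≤ ρ U)
    {U V : Finset E} (hU : ∑ a ∈ U, x a = ρ U) (hV : ∑ a ∈ V, x a = ρ V) :
    (∑ a ∈ U ∪ V, x a = ρ (U ∪ V)) ∧ (∑ a ∈ U ∩ V, x a = ρ (U ∩ V)) := by
  have h1 := hx (U ∪ V)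
  have h2 := hx (U ∩ V)
  have h3 := hsub U V
  have h4 : ∑ a ∈ U ∪ V, x a + ∑ a ∈ U ∩ V, x a = ∑ a ∈ U, x a + ∑ a ∈ V, x a :=
    Finset.sum_union_inter
  constructor <;> linarith

lemma exists_minTight
    (hsub : ∀ U V : Finset E, ρ (U ∪ V) + ρ (U ∩ V) ≤ ρ U + ρ V)
    (x : E → ℝ) (hx : ∀ U : Finset E, ∑ a ∈ U, x a ≤ ρ U)
    (hE : ∑ a, x a = ρ Finset.univ) (e : E) :
    ∃ A : Finset E, e ∈ A ∧ (∑ a ∈ A, x a = ρ A) ∧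
      ∀ U : Finset E, e ∈ U → ∑ a ∈ U, x a = ρ U → A ⊆ U := by
  classical
  set S := Finset.univ.filter
    (fun U : Finset E => e ∈ U ∧ ∑ a ∈ U, x a = ρ U) with hS
  have hne : S.Nonempty := ⟨Finset.univ, by simp [hS, hE]⟩
  obtain ⟨A, hA, hmin⟩ := S.exists_min_image Finset.card hne
  rw [hS, Finset.mem_filter] at hA
  refine ⟨A, hA.2.1, hA.2.2, ?_⟩
  intro U heU hU
  have hint := (tight_union_inter ρ hsub x hx hA.2.2 hU).2
  have hmem : A ∩ U ∈ S := by
    rw [hS, Finset.mem_filter]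
    exact ⟨Finset.mem_univ _, Finset.mem_inter.mpr ⟨hA.2.1, heU⟩, hint⟩
  have hc := hmin _ hmem
  have heq : A ∩ U = A :=
    Finset.eq_of_subset_of_card_le Finset.inter_subset_left hc
  intro a ha
  rw [← heq] at ha
  exact (Finset.mem_inter.mp ha).2

lemma exists_maxTight
    (hsub : ∀ U V : Finset E, ρ (U ∪ V) + ρ (U ∩ V) ≤ ρ U + ρ V)
    (hnorm : ρ ∅ = 0)
    (x : E → ℝ) (hx : ∀ U : Finset E, ∑ a ∈ U, x a ≤ ρ U) (e : E) :
    ∃ C : Finset E, e ∉ C ∧ (∑ a ∈ C, x a = ρ C) ∧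
      ∀ U : Finset E, e ∉ U → ∑ a ∈ U, x a = ρ U → U ⊆ C := by
  classical
  set S := Finset.univ.filter
    (fun U : Finset E => e ∉ U ∧ ∑ a ∈ U, x a = ρ U) with hS
  have hne : S.Nonempty := ⟨∅, by simp [hS, hnorm]⟩
  obtain ⟨C, hC, hmax⟩ := S.exists_max_image Finset.card hne
  rw [hS, Finset.mem_filter] at hC
  refine ⟨C, hC.2.1, hC.2.2, ?_⟩
  intro U heU hU
  have huni := (tight_union_inter ρ hsub x hx hC.2.2 hU).1
  have hmem : C ∪ U ∈ S := by
    rw [hS, Finset.mem_filter]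
    refine ⟨Finset.mem_univ _, ?_, huni⟩
    simp [hC.2.1, heU]
  have hc := hmax _ hmem
  have heq : C ∪ U = C :=
    (Finset.eq_of_subset_of_card_le Finset.subset_union_left hc).symm
  intro a ha
  rw [← heq]
  exact Finset.mem_union_right _ ha

lemma move_mem_s17 (x : E → ℝ) (hx : x ∈ basePolytope ρ) {e f : E} (hef : e ≠ f)
    {ε : ℝ} (hε : 0 < ε) (hεf : ε ≤ x f)
    (hslack : ∀ U : Finset E, e ∈ U → f ∉ U → ∑ a ∈ U, x a + ε ≤ ρ U) :
    x + ε • (Pi.single e (1:ℝ) - Pi.single f 1) ∈ basePolytope ρ := by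
  obtain ⟨hx0, hxU, hxE⟩ := hx
  have hsum : ∀ U : Finset E,
      ∑ a ∈ U, ((x + ε • (Pi.single e (1:ℝ) - Pi.single f 1) : E → ℝ)) a
      = ∑ a ∈ U, x a + ε * ((if e ∈ U then (1:ℝ) else 0) - (if f ∈ U then (1:ℝ) else 0)) := by
    intro U
    simp only [Pi.add_apply, Pi.smul_apply, Pi.sub_apply, smul_eq_mul]
    rw [Finset.sum_add_distrib, ← Finset.mul_sum, Finset.sum_sub_distrib,
      Finset.sum_pi_single', Finset.sum_pi_single']
  refine ⟨?_, ?_, ?_⟩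
  · intro a
    simp only [Pi.add_apply, Pi.smul_apply, Pi.sub_apply, smul_eq_mul, Pi.single_apply]
    by_cases hae : a = e
    · subst hae
      simp [Ne.symm hef, hef]
      nlinarith [hx0 a]
    · by_cases haf : a = f
      · subst haf
        simp [hae]
        linarith
      · simp [hae, haf]
        exact hx0 a
  · intro U
    rw [hsum U]
    by_cases heU : e ∈ U <;> by_cases hfU : f ∈ U <;>
      simp only [heU, hfU, if_true, if_false]
    · simpa using hxU U
    · simpa using hslack U heU hfU
    · have := hxU U; nlinarith
    · simpa using hxU U
  · rw [hsum Finset.univ]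
    simp [hxE]

end Aux

theorem stmt17 {E : Type*} [Fintype E] [DecidableEq E] (ρ : Finset E → ℝ)
    (hsub : ∀ U V : Finset E, ρ (U ∪ V) + ρ (U ∩ V) ≤ ρ U + ρ V)
    (hmono : ∀ U V : Finset E, U ⊆ V → ρ U ≤ ρ V)
    (hnorm : ρ ∅ = 0)
    (x xbar : E → ℝ) (hx : x ∈ basePolytope ρ) (hxbar : xbar ∈ basePolytope ρ)
    (e : E) (he : x e < xbar e) :
    ∃ f : E, f ≠ e ∧ xbar f < x f ∧ ∃ ε : ℝ, 0 < ε ∧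
      x + ε • (Pi.single e (1:ℝ) - Pi.single f 1) ∈ basePolytope ρ ∧
      xbar + ε • (Pi.single f (1:ℝ) - Pi.single e 1) ∈ basePolytope ρ := by
  classical
  obtain ⟨hx0, hxU, hxE⟩ := hx
  obtain ⟨hb0, hbU, hbE⟩ := hxbar
  obtain ⟨A, heA, hAt, hAmin⟩ := exists_minTight ρ hsub x hxU hxE e
  obtain ⟨C, heC, hCt, hCmax⟩ := exists_maxTight ρ hsub hnorm xbar hbU e
  -- find the exchange element f
  have hfex : ∃ f ∈ A, f ≠ e ∧ xbar f < x f ∧ f ∉ C := by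
    by_contra hcon
    push_neg at hcon
    have hle : ∀ g ∈ A \ C, x g ≤ xbar g := by
      intro g hg
      rcases Finset.mem_sdiff.mp hg with ⟨hgA, hgC⟩
      by_cases hge : g = e
      · subst hge; linarith
      · by_contra h
        push_neg at h
        exact hgC (hcon g hgA hge h)
    have heAC : e ∈ A \ C := Finset.mem_sdiff.mpr ⟨heA, heC⟩
    have hstrict : ∑ a ∈ A \ C, x a < ∑ a ∈ A \ C, xbar a :=
      Finset.sum_lt_sum hle ⟨e, heAC, he⟩
    have h1 : ∑ a ∈ A ∪ C, xbar a = ∑ a ∈ C, xbar a + ∑ a ∈ A \ C, xbar a := by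
      rw [← Finset.sum_union Finset.disjoint_sdiff,
        Finset.union_sdiff_self_eq_union, Finset.union_comm]
    have h2 : ∑ a ∈ A ∩ C, x a + ∑ a ∈ A \ C, x a = ∑ a ∈ A, x a :=
      Finset.sum_inter_add_sum_sdiff A C x
    have h3 := hbU (A ∪ C)
    have h4 := hxU (A ∩ C)
    have h5 := hsub A C
    linarith
  obtain ⟨f, hfA, hfe, hfx, hfC⟩ := hfex
  -- strict slack for all relevant sets
  have key1 : ∀ U : Finset E, e ∈ U → f ∉ U → ∑ a ∈ U, x a < ρ U := by
    intro U heU hfU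
    rcases lt_or_eq_of_le (hxU U) with h | h
    · exact h
    · exact absurd (hAmin U heU h hfA) hfU
  have key2 : ∀ U : Finset E, f ∈ U → e ∉ U → ∑ a ∈ U, xbar a < ρ U := by
    intro U hfU heU
    rcases lt_or_eq_of_le (hbU U) with h | h
    · exact h
    · exact absurd (hCmax U heU h hfU) hfC
  -- define ε
  set S1 := Finset.univ.filter (fun U : Finset E => e ∈ U ∧ f ∉ U) with hS1
  set S2 := Finset.univ.filter (fun U : Finset E => f ∈ U ∧ e ∉ U) with hS2
  have hS1ne : S1.Nonempty := ⟨{e}, by simp [hS1, hfe]⟩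
  have hS2ne : S2.Nonempty := ⟨{f}, by simp [hS2, hfe.symm]⟩
  set m1 := S1.inf' hS1ne (fun U => ρ U - ∑ a ∈ U, x a) with hm1
  set m2 := S2.inf' hS2ne (fun U => ρ U - ∑ a ∈ U, xbar a) with hm2
  have hm1pos : 0 < m1 := by
    rw [hm1, Finset.lt_inf'_iff]
    intro U hU
    rw [hS1, Finset.mem_filter] at hU
    have := key1 U hU.2.1 hU.2.2
    linarith
  have hm2pos : 0 < m2 := by
    rw [hm2, Finset.lt_inf'_iff]
    intro U hU
    rw [hS2, Finset.mem_filter] at hU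
    have := key2 U hU.2.1 hU.2.2
    linarith
  have hxf : 0 < x f := lt_of_le_of_lt (hb0 f) hfx
  have hbe : 0 < xbar e := lt_of_le_of_lt (hx0 e) he
  set ε := min (min (x f) (xbar e)) (min m1 m2) with hε
  have hεpos : 0 < ε := by
    rw [hε]
    exact lt_min (lt_min hxf hbe) (lt_min hm1pos hm2pos)
  refine ⟨f, hfe, hfx, ε, hεpos, ?_, ?_⟩
  · refine move_mem_s17 ρ x ⟨hx0, hxU, hxE⟩ (Ne.symm hfe) hεpos ?_ ?_
    · calc ε ≤ min (x f) (xbar e) := min_le_left _ _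
        _ ≤ x f := min_le_left _ _
    · intro U heU hfU
      have hU1 : U ∈ S1 := by rw [hS1, Finset.mem_filter]; exact ⟨Finset.mem_univ _, heU, hfU⟩
      have := Finset.inf'_le (fun U => ρ U - ∑ a ∈ U, x a) hU1
      have hεm : ε ≤ m1 := le_trans (min_le_right _ _) (min_le_left _ _)
      rw [← hm1] at this
      linarith
  · refine move_mem_s17 ρ xbar ⟨hb0, hbU, hbE⟩ hfe hεpos ?_ ?_
    · calc ε ≤ min (x f) (xbar e) := min_le_left _ _
        _ ≤ xbar e := min_le_right _ _
    · intro U hfU heU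
      have hU2 : U ∈ S2 := by rw [hS2, Finset.mem_filter]; exact ⟨Finset.mem_univ _, hfU, heU⟩
      have := Finset.inf'_le (fun U => ρ U - ∑ a ∈ U, xbar a) hU2
      have hεm : ε ≤ m2 := le_trans (min_le_right _ _) (min_le_right _ _)
      rw [← hm2] at this
      linarith
end
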